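/- arXiv:1507.01418 — 6 statements merged into one kernel-verified Lean document; each statement's English description precedes it below -/
import Mathlib

section
/- Let X be a complex Banach space, let A be a bounded linear operator on X, let θ ∈ ℝ and ω ∈ ℝ, and set A_θ := e^{-iθ}A. Then the following are equivalent: (i) ‖exp(t A_θ)‖ ≤ e^{tω} for all real t ≥ 0; (ii) for every real λ > ω the operator e^{iθ}λ·I − A is invertible in the algebra of bounded operators on X (i.e. e^{iθ}λ belongs to the resolvent set of A) and ‖(e^{iθ}λ·I − A)^{-1}‖ ≤ 1/(λ − ω). -/
open Complex

variable {X : Type*} [NormedAddCommGroup X] [NormedSpace ℂ X] [CompleteSpace X]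

/-- The open half plane `H_{θ,ω}`, the rotation by the angle `θ` of `{z | Re z > ω}`. -/
def halfPlane (θ ω : ℝ) : Set ℂ :=
  {z : ℂ | ω < (Complex.exp (-(θ : ℂ) * Complex.I) * z).re}

/-- The numerical resolvent set of a bounded operator `A` : the union of all open half
planes `H_{θ,ω}` contained in the resolvent set of `A` on which
`‖R(z, A)‖ ≤ 1 / dist(z, ∂H_{θ,ω}) = 1 / (Re (e^{-iθ} z) - ω)`. -/
noncomputable def numResolventSet (A : X →L[ℂ] X) : Set ℂ :=
  {z : ℂ | ∃ θ ω : ℝ, z ∈ halfPlane θ ω ∧ halfPlane θ ω ⊆ resolventSet ℂ A ∧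
    ∀ w ∈ halfPlane θ ω,
      ‖resolvent A w‖ ≤ 1 / ((Complex.exp (-(θ : ℂ) * Complex.I) * w).re - ω)}

/-- The numerical spectrum of a bounded operator `A`. -/
noncomputable def numSpectrum (A : X →L[ℂ] X) : Set ℂ := (numResolventSet A)ᶜ

/-- The duality set `J(x)` of a vector `x`. -/
noncomputable def dualitySet (x : X) : Set (X →L[ℂ] ℂ) :=
  {j | j x = (‖x‖ ^ 2 : ℝ) ∧ ‖j‖ = ‖x‖}

/-!
Rotating by `e^{-iθ}` and shifting by `ω` reduces the theorem to contraction semigroups: for `C` in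
a real Banach algebra, `‖exp (t C)‖ ≤ 1` for all `t ≥ 0` iff `‖R(l, C)‖ ≤ 1 / l` for all `l > 0`.

If `exp (t C)` is contractive, `D s = (1 - e^{-sl} exp (s C)) / s` is invertible by a Neumann series
with `‖(D s)⁻¹‖ ≤ 1 / l + s`, and `D s → l - C` as `s → 0⁺`; invertibility together with the bound
passes to the limit. Conversely, `‖(1 - hC)⁻¹‖ ≤ 1` gives `‖1 + hC‖ ≤ 1 + h²‖C‖²`, hence
`‖exp (hC)‖ ≤ 1 + o(h)`, and `exp (tC) = exp (tC / n) ^ n` then forces `‖exp (tC)‖ ≤ 1`.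
-/

open Filter Topology

section NormedRing
variable {R : Type*} [NormedRing R]

theorem norm_one_add_le_of_norm_inverse_one_sub_le {x : R} (hx : IsUnit (1 - x))
    (hS : ‖Ring.inverse (1 - x)‖ ≤ 1) : ‖1 + x‖ ≤ 1 + ‖x‖ ^ 2 := by
  set S := Ring.inverse (1 - x)
  have hSx : S * (1 - x) = 1 := Ring.inverse_mul_cancel _ hx
  have hsplit : 1 + x = S - S * x * x := by
    calc 1 + x = S * (1 - x) * (1 + x) := by rw [hSx, one_mul]
      _ = S - S * x * x := by noncomm_ring
  calc ‖1 + x‖ ≤ ‖S‖ + ‖S * x * x‖ := hsplit ▸ norm_sub_le _ _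
    _ ≤ ‖S‖ + ‖S‖ * ‖x‖ * ‖x‖ := by grw [norm_mul₃_le]
    _ ≤ 1 + ‖x‖ ^ 2 := by nlinarith [norm_nonneg x, norm_nonneg S]

variable [HasSummableGeomSeries R]

theorem norm_inverse_one_sub_le (h1 : ‖(1 : R)‖ ≤ 1) {x : R} (hx : ‖x‖ < 1) :
    ‖Ring.inverse (1 - x)‖ ≤ (1 - ‖x‖)⁻¹ := by
  rw [← geom_series_eq_inverse x hx]
  linarith [tsum_geometric_le_of_norm_lt_one x hx]

variable {ι : Type*} {l : Filter ι} [l.NeBot] {D : ι → R} {L : R} {b : ι → ℝ} {β : ℝ}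

theorem isUnit_of_tendsto_of_norm_inverse_le (hD : Tendsto D l (𝓝 L))
    (hunit : ∀ᶠ i in l, IsUnit (D i)) (hb : ∀ᶠ i in l, ‖Ring.inverse (D i)‖ ≤ b i)
    (hβ : Tendsto b l (𝓝 β)) : IsUnit L := by
  set M := |β| + 1
  have hM : 0 < M := by positivity
  have hbM : ∀ᶠ i in l, b i < M :=
    hβ.eventually (gt_mem_nhds ((le_abs_self β).trans_lt (lt_add_one _)))
  have hclose : ∀ᶠ i in l, ‖L - D i‖ < M⁻¹ := by
    simpa [dist_eq_norm'] using Metric.tendsto_nhds.mp hD _ (inv_pos.mpr hM)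
  obtain ⟨i, hDi, hbi, hbMi, hLi⟩ := (hunit.and (hb.and (hbM.and hclose))).exists
  have hsmall : ‖-(Ring.inverse (D i) * (L - D i))‖ < 1 := by
    rw [norm_neg]
    calc ‖Ring.inverse (D i) * (L - D i)‖ ≤ ‖Ring.inverse (D i)‖ * ‖L - D i‖ := norm_mul_le _ _
      _ < M * M⁻¹ := mul_lt_mul'' (hbi.trans_lt hbMi) hLi (norm_nonneg _) (norm_nonneg _)
      _ = 1 := mul_inv_cancel₀ hM.ne'
  have hL : L = D i * (1 - -(Ring.inverse (D i) * (L - D i))) := by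
    rw [sub_neg_eq_add, mul_add, mul_one, ← mul_assoc, Ring.mul_inverse_cancel _ hDi, one_mul,
      add_sub_cancel]
  rw [hL]
  exact hDi.mul (isUnit_one_sub_of_norm_lt_one hsmall)

theorem norm_inverse_le_of_tendsto (hD : Tendsto D l (𝓝 L)) (hL : IsUnit L)
    (hb : ∀ᶠ i in l, ‖Ring.inverse (D i)‖ ≤ b i) (hβ : Tendsto b l (𝓝 β)) :
    ‖Ring.inverse L‖ ≤ β := by
  have hcont := NormedRing.inverse_continuousAt hL.unit
  rw [hL.unit_spec] at hcont
  exact le_of_tendsto_of_tendsto (hcont.tendsto.comp hD).norm hβ hb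

end NormedRing

section Field
variable {𝕜 A : Type*} [Field 𝕜] [Ring A] [Algebra 𝕜 A]

theorem isUnit_smul_iff₀ {c : 𝕜} (hc : c ≠ 0) (x : A) : IsUnit (c • x) ↔ IsUnit x :=
  isUnit_smul_iff (Units.mk0 c hc) x

theorem Ring.inverse_smul (c : 𝕜) (x : A) : Ring.inverse (c • x) = c⁻¹ • Ring.inverse x := by
  rcases eq_or_ne c 0 with rfl | hc
  · simp
  by_cases hx : IsUnit x
  · rw [← mul_one (Ring.inverse (c • x)),
      Ring.inverse_mul_eq_iff_eq_mul _ _ _ ((isUnit_smul_iff₀ hc x).2 hx), smul_mul_smul_comm,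
      mul_inv_cancel₀ hc, Ring.mul_inverse_cancel _ hx, one_smul]
  · rw [Ring.inverse_non_unit _ hx, Ring.inverse_non_unit _ ((isUnit_smul_iff₀ hc x).not.2 hx),
      smul_zero]

theorem spectrum.resolvent_smul_mul (u z : 𝕜) (a : A) :
    resolvent (u • a) (u * z) = u⁻¹ • resolvent a z := by
  rw [resolvent, resolvent, map_mul, ← Algebra.smul_def, ← smul_sub, Ring.inverse_smul]

theorem spectrum.mul_mem_resolventSet_smul_iff {u : 𝕜} (hu : u ≠ 0) (z : 𝕜) (a : A) :
    u * z ∈ resolventSet 𝕜 (u • a) ↔ z ∈ resolventSet 𝕜 a := by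
  rw [mem_resolventSet_iff, mem_resolventSet_iff, map_mul, ← Algebra.smul_def, ← smul_sub,
    isUnit_smul_iff₀ hu]

end Field

namespace spectrum

section Shift
variable {R A : Type*} [CommRing R] [Ring A] [Algebra R A]

theorem resolvent_add_algebraMap (a : A) (r s : R) :
    resolvent (a + algebraMap R A s) r = resolvent a (r - s) := by
  rw [resolvent, resolvent, map_sub, sub_add_eq_sub_sub, sub_right_comm]

theorem mem_resolventSet_add_algebraMap_iff (a : A) (r s : R) :
    r ∈ resolventSet R (a + algebraMap R A s) ↔ r - s ∈ resolventSet R a := by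
  rw [mem_resolventSet_iff, mem_resolventSet_iff, map_sub, sub_add_eq_sub_sub, sub_right_comm]

end Shift

section ScalarTower
variable {R S A : Type*} [CommSemiring R] [CommSemiring S] [Ring A] [Algebra R S] [Algebra S A]
  [Algebra R A] [IsScalarTower R S A]

theorem resolvent_algebraMap (a : A) (r : R) :
    resolvent a (algebraMap R S r) = resolvent a r := by
  rw [resolvent, resolvent, ← IsScalarTower.algebraMap_apply]

theorem algebraMap_mem_resolventSet_iff (a : A) (r : R) :
    algebraMap R S r ∈ resolventSet S a ↔ r ∈ resolventSet R a := by
  rw [mem_resolventSet_iff, mem_resolventSet_iff, ← IsScalarTower.algebraMap_apply]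

end ScalarTower

end spectrum

namespace NormedSpace

variable {𝔸 : Type*} [NormedRing 𝔸] [NormedAlgebra ℝ 𝔸] [CompleteSpace 𝔸]

theorem exp_smul_add_algebraMap (C : 𝔸) (s ω : ℝ) :
    exp (s • (C + algebraMap ℝ 𝔸 ω)) = Real.exp (s * ω) • exp (s • C) := by
  let +nondep : NormedAlgebra ℚ 𝔸 := .restrictScalars ℚ ℝ 𝔸
  rw [smul_add, Algebra.smul_def s (algebraMap ℝ 𝔸 ω), ← map_mul,
    exp_add_of_commute (Algebra.commutes _ _).symm, ← algebraMap_exp_comm, ← Real.exp_eq_exp_ℝ,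
    ← Algebra.commutes, ← Algebra.smul_def]

theorem norm_exp_smul_add_algebraMap (C : 𝔸) (s ω : ℝ) :
    ‖exp (s • (C + algebraMap ℝ 𝔸 ω))‖ = Real.exp (s * ω) * ‖exp (s • C)‖ := by
  rw [exp_smul_add_algebraMap, norm_smul, Real.norm_of_nonneg (Real.exp_pos _).le]

theorem tendsto_slope_exp_smul (E : 𝔸) :
    Tendsto (fun s : ℝ => s⁻¹ • (exp (s • E) - 1)) (𝓝[>] 0) (𝓝 E) := by
  have h := hasDerivAt_exp_smul_const (𝕂 := ℝ) E 0
  rw [zero_smul, exp_zero, one_mul, hasDerivAt_iff_tendsto_slope] at h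
  refine (h.mono_left (nhdsWithin_mono _ fun s hs => ne_of_gt hs)).congr fun s => ?_
  rw [slope_def_module, sub_zero, zero_smul, exp_zero]

theorem mem_resolventSet_and_norm_resolvent_le_of_norm_exp_smul_le_one (h1 : ‖(1 : 𝔸)‖ ≤ 1)
    {C : 𝔸} (hC : ∀ t : ℝ, 0 ≤ t → ‖exp (t • C)‖ ≤ 1) {l : ℝ} (hl : 0 < l) :
    l ∈ resolventSet ℝ C ∧ ‖resolvent C l‖ ≤ 1 / l := by
  set E := C + algebraMap ℝ 𝔸 (-l)
  have hE : ∀ s : ℝ, 0 < s → ‖exp (s • E)‖ ≤ (1 + s * l)⁻¹ := fun s hs => by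
    calc ‖exp (s • E)‖ ≤ Real.exp (-(s * l)) := by
          rw [norm_exp_smul_add_algebraMap, mul_neg]
          exact mul_le_of_le_one_right (Real.exp_pos _).le (hC s hs.le)
      _ ≤ (1 + s * l)⁻¹ := by
          rw [Real.exp_neg]
          exact inv_anti₀ (by positivity) (by linarith [Real.add_one_le_exp (s * l)])
  have hgap : ∀ s : ℝ, 0 < s → (1 + s * l)⁻¹ < 1 := fun s hs =>
    inv_lt_one_of_one_lt₀ (by nlinarith)
  -- `(D s)⁻¹ = s ∑ₖ exp (k s E)` is a Riemann sum for `R(l, C) = ∫₀^∞ exp (t E) dt`.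
  set D := fun s : ℝ => s⁻¹ • (1 - exp (s • E))
  have hD : Tendsto D (𝓝[>] 0) (𝓝 (algebraMap ℝ 𝔸 l - C)) := by
    convert (tendsto_slope_exp_smul E).neg using 2 with s
    · rw [← smul_neg, neg_sub]
    · simp only [E, map_neg]; abel
  have hunit : ∀ᶠ s in 𝓝[>] 0, IsUnit (D s) := eventually_mem_nhdsWithin.mono fun s hs =>
    (isUnit_smul_iff₀ (inv_ne_zero (ne_of_gt hs)) _).2
      (isUnit_one_sub_of_norm_lt_one ((hE s hs).trans_lt (hgap s hs)))
  have hbound : ∀ᶠ s in 𝓝[>] 0, ‖Ring.inverse (D s)‖ ≤ 1 / l + s :=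
    eventually_mem_nhdsWithin.mono fun (s : ℝ) (hs : 0 < s) => by
      have hEs := hE s hs
      have hgaps := hgap s hs
      calc ‖Ring.inverse (D s)‖ = s * ‖Ring.inverse (1 - exp (s • E))‖ := by
            rw [Ring.inverse_smul, inv_inv, norm_smul, Real.norm_of_nonneg hs.le]
        _ ≤ s * (1 - ‖exp (s • E)‖)⁻¹ := by
            gcongr; exact norm_inverse_one_sub_le h1 (hEs.trans_lt hgaps)
        _ ≤ s * (1 - (1 + s * l)⁻¹)⁻¹ := by gcongr
        _ = 1 / l + s := by field_simp; ring
  have hlim : Tendsto (fun s : ℝ => 1 / l + s) (𝓝[>] 0) (𝓝 (1 / l)) :=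
    ((continuous_const.add continuous_id).tendsto' 0 _ (add_zero _)).mono_left nhdsWithin_le_nhds
  have hL := isUnit_of_tendsto_of_norm_inverse_le hD hunit hbound hlim
  exact ⟨spectrum.mem_resolventSet_iff.2 hL, norm_inverse_le_of_tendsto hD hL hbound hlim⟩

theorem eventually_norm_exp_smul_le_one_add {C : 𝔸}
    (hres : ∀ l : ℝ, 0 < l → l ∈ resolventSet ℝ C ∧ ‖resolvent C l‖ ≤ 1 / l)
    {ε : ℝ} (hε : 0 < ε) : ∀ᶠ h in 𝓝[>] (0 : ℝ), ‖exp (h • C)‖ ≤ 1 + ε * h := by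
  have hderiv := hasDerivAt_exp_smul_const (𝕂 := ℝ) C 0
  rw [zero_smul, exp_zero, one_mul, hasDerivAt_iff_isLittleO] at hderiv
  have hrem : ∀ᶠ h in 𝓝[>] (0 : ℝ), ‖exp (h • C) - 1 - h • C‖ ≤ ε / 2 * h := by
    filter_upwards [(hderiv.def (half_pos hε)).filter_mono nhdsWithin_le_nhds,
      self_mem_nhdsWithin] with h hh (hpos : 0 < h)
    simpa [abs_of_pos hpos] using hh
  have hsmall : ∀ᶠ h in 𝓝[>] (0 : ℝ), h * ‖C‖ ^ 2 ≤ ε / 2 := by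
    have : Tendsto (fun h : ℝ => h * ‖C‖ ^ 2) (𝓝[>] 0) (𝓝 (0 * ‖C‖ ^ 2)) :=
      (tendsto_id.mul_const _).mono_left nhdsWithin_le_nhds
    rw [zero_mul] at this
    exact this.eventually (ge_mem_nhds (half_pos hε))
  filter_upwards [hrem, hsmall, self_mem_nhdsWithin] with h hrem hsmall (hpos : 0 < h)
  obtain ⟨hmem, hR⟩ := hres h⁻¹ (inv_pos.2 hpos)
  have hunit : IsUnit (1 - h • C) := by
    rwa [← spectrum.mul_mem_resolventSet_smul_iff hpos.ne', mul_inv_cancel₀ hpos.ne',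
      spectrum.mem_resolventSet_iff, map_one] at hmem
  have hS : ‖Ring.inverse (1 - h • C)‖ ≤ 1 := by
    have hsmul := spectrum.resolvent_smul_mul h h⁻¹ C
    rw [mul_inv_cancel₀ hpos.ne', resolvent, map_one] at hsmul
    rw [hsmul, norm_smul, norm_inv, Real.norm_of_nonneg hpos.le]
    calc h⁻¹ * ‖resolvent C h⁻¹‖ ≤ h⁻¹ * (1 / h⁻¹) := by gcongr
      _ = 1 := by field_simp
  have hlin := norm_one_add_le_of_norm_inverse_one_sub_le hunit hS
  rw [norm_smul, Real.norm_of_nonneg hpos.le] at hlin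
  calc ‖exp (h • C)‖ ≤ ‖1 + h • C‖ + ‖exp (h • C) - 1 - h • C‖ := by
        rw [sub_sub]; exact norm_le_insert' _ _
    _ ≤ 1 + (h * ‖C‖) ^ 2 + ε / 2 * h := add_le_add hlin hrem
    _ ≤ 1 + ε * h := by nlinarith

theorem norm_exp_smul_le_one_of_eventually (h1 : ‖(1 : 𝔸)‖ ≤ 1) {C : 𝔸}
    (hC : ∀ ε : ℝ, 0 < ε → ∀ᶠ h in 𝓝[>] (0 : ℝ), ‖exp (h • C)‖ ≤ 1 + ε * h)
    {t : ℝ} (ht : 0 ≤ t) : ‖exp (t • C)‖ ≤ 1 := by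
  rcases ht.eq_or_lt with rfl | ht
  · rwa [zero_smul, exp_zero]
  have hε : ∀ ε : ℝ, 0 < ε → ‖exp (t • C)‖ ≤ Real.exp (ε * t) := fun ε hε => by
    have hsteps : Tendsto (fun n : ℕ => t / n) atTop (𝓝[>] 0) :=
      tendsto_nhdsWithin_iff.2 ⟨tendsto_const_div_atTop_nhds_zero_nat t,
        eventually_gt_atTop 0 |>.mono fun n hn => div_pos ht (Nat.cast_pos.2 hn)⟩
    obtain ⟨n, hn, hstep⟩ := ((eventually_gt_atTop 0).and (hsteps.eventually (hC ε hε))).exists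
    have hsplit : t • C = n • ((t / n) • C) := by
      rw [← Nat.cast_smul_eq_nsmul ℝ, smul_smul, mul_div_cancel₀ _ (Nat.cast_ne_zero.2 hn.ne')]
    let +nondep : NormedAlgebra ℚ 𝔸 := .restrictScalars ℚ ℝ 𝔸
    calc ‖exp (t • C)‖ ≤ ‖exp ((t / n) • C)‖ ^ n := by
          rw [hsplit, exp_nsmul]; exact norm_pow_le' _ hn
      _ ≤ Real.exp (ε * (t / n)) ^ n := by
          gcongr
          exact hstep.trans (by linarith [Real.add_one_le_exp (ε * (t / n))])
      _ = Real.exp (ε * t) := by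
          rw [← Real.exp_nat_mul]; congr 1; field_simp
  have hlim : Tendsto (fun ε : ℝ => Real.exp (ε * t)) (𝓝[>] 0) (𝓝 1) := by
    have hcont : Continuous fun ε : ℝ => Real.exp (ε * t) := by fun_prop
    simpa using (hcont.tendsto 0).mono_left nhdsWithin_le_nhds
  exact ge_of_tendsto hlim (eventually_mem_nhdsWithin.mono hε)

theorem norm_exp_smul_le_one_iff (h1 : ‖(1 : 𝔸)‖ ≤ 1) (C : 𝔸) :
    (∀ t : ℝ, 0 ≤ t → ‖exp (t • C)‖ ≤ 1) ↔
      ∀ l : ℝ, 0 < l → l ∈ resolventSet ℝ C ∧ ‖resolvent C l‖ ≤ 1 / l :=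
  ⟨fun hC _ hl => mem_resolventSet_and_norm_resolvent_le_of_norm_exp_smul_le_one h1 hC hl,
    fun hres _ ht => norm_exp_smul_le_one_of_eventually h1
      (fun _ hε => eventually_norm_exp_smul_le_one_add hres hε) ht⟩

theorem norm_exp_smul_le_iff (h1 : ‖(1 : 𝔸)‖ ≤ 1) (B : 𝔸) (ω : ℝ) :
    (∀ t : ℝ, 0 ≤ t → ‖exp (t • B)‖ ≤ Real.exp (t * ω)) ↔
      ∀ lam : ℝ, ω < lam → lam ∈ resolventSet ℝ B ∧ ‖resolvent B lam‖ ≤ 1 / (lam - ω) := by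
  obtain ⟨C, rfl⟩ : ∃ C, B = C + algebraMap ℝ 𝔸 ω :=
    ⟨B - algebraMap ℝ 𝔸 ω, (sub_add_cancel _ _).symm⟩
  simp only [norm_exp_smul_add_algebraMap, mul_le_iff_le_one_right (Real.exp_pos _),
    norm_exp_smul_le_one_iff h1, spectrum.mem_resolventSet_add_algebraMap_iff,
    spectrum.resolvent_add_algebraMap]
  exact ⟨fun h lam hlam => h _ (sub_pos.2 hlam),
    fun h l hl => by simpa using h (l + ω) (lt_add_of_pos_left ω hl)⟩

end NormedSpace

/-- Hille–Yosida type equivalence (rotated, bounded case): `e^{-iθ}A` generates an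
`ω`-contractive semigroup iff the resolvent estimate holds on `e^{iθ}(ω, ∞)`. -/
theorem semigroup_contraction_iff_resolvent_estimate (A : X →L[ℂ] X) (θ ω : ℝ) :
    (∀ t : ℝ, 0 ≤ t →
        ‖NormedSpace.exp (t • (Complex.exp (-(θ : ℂ) * Complex.I) • A))‖ ≤ Real.exp (t * ω)) ↔
      (∀ lam : ℝ, ω < lam →
        (Complex.exp ((θ : ℂ) * Complex.I) * (lam : ℂ)) ∈ resolventSet ℂ A ∧
        ‖resolvent A (Complex.exp ((θ : ℂ) * Complex.I) * (lam : ℂ))‖ ≤ 1 / (lam - ω)) := by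
  set u := Complex.exp ((θ : ℂ) * Complex.I)
  have hu : u ≠ 0 := Complex.exp_ne_zero _
  have hu_norm : ‖u‖ = 1 := Complex.norm_exp_ofReal_mul_I θ
  obtain ⟨B, rfl⟩ : ∃ B, A = u • B := ⟨u⁻¹ • A, (smul_inv_smul₀ hu A).symm⟩
  rw [neg_mul, Complex.exp_neg, inv_smul_smul₀ hu]
  refine (NormedSpace.norm_exp_smul_le_iff ContinuousLinearMap.norm_id_le B ω).trans
    (forall₂_congr fun lam _ => ?_)
  rw [spectrum.mul_mem_resolventSet_smul_iff hu, spectrum.resolvent_smul_mul, norm_smul, norm_inv,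
    hu_norm, inv_one, one_mul, ← Complex.coe_algebraMap, spectrum.algebraMap_mem_resolventSet_iff,
    spectrum.resolvent_algebraMap]
end

section
/- Let X be a complex Banach space, let A be a bounded linear operator on X, let θ ∈ ℝ and ω ∈ ℝ. Then the following are equivalent: (i) for every real λ > ω, the point e^{iθ}λ belongs to the resolvent set of A and ‖(e^{iθ}λ·I − A)^{-1}‖ ≤ 1/(λ − ω); (ii) every z ∈ ℂ with Re(e^{-iθ}z) > ω belongs to the resolvent set of A and satisfies ‖(z·I − A)^{-1}‖ ≤ 1/(Re(e^{-iθ}z) − ω). -/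
/-!
Fix `z` with `d := Re(e^{-iθ} z) - ω > 0` and `ε ∈ (0, d)`. Far out on the ray there is a point
`z₀ = e^{iθ} t` with `‖z - z₀‖ ≤ t - Re(e^{-iθ} z) + ε < t - ω`, so `z` lies in the disc of
radius `1 / ‖R(z₀, A)‖ ≥ t - ω` around `z₀`. On that disc the Neumann series shows that `z` is in the
resolvent set, and the first resolvent identity gives
`‖R(z, A)‖ ≤ 1 / (t - ω - ‖z - z₀‖) ≤ 1 / (d - ε)`; let `ε → 0`.
-/

open Complex

variable {X : Type*} [NormedAddCommGroup X] [NormedSpace ℂ X] [CompleteSpace X]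

open Filter Topology

section Algebraic

variable {R 𝒜 : Type*} [CommRing R] [Ring 𝒜] [Algebra R 𝒜] {a : 𝒜} {r s : R}

theorem resolvent_sub_resolvent_eq_smul_mul (hr : r ∈ resolventSet R a)
    (hs : s ∈ resolventSet R a) :
    resolvent a r - resolvent a s = (s - r) • (resolvent a r * resolvent a s) := by
  set u := IsUnit.unit (spectrum.mem_resolventSet_iff.mp hr)
  set v := IsUnit.unit (spectrum.mem_resolventSet_iff.mp hs)
  have hvu : (v : 𝒜) - u = (s - r) • 1 := by
    rw [IsUnit.unit_spec, IsUnit.unit_spec, sub_sub_sub_cancel_right, ← map_sub,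
      Algebra.algebraMap_eq_smul_one]
  calc resolvent a r - resolvent a s = ↑u⁻¹ - ↑v⁻¹ := by
        rw [spectrum.resolvent_eq hr, spectrum.resolvent_eq hs]
    _ = ↑u⁻¹ * (↑v - ↑u) * ↑v⁻¹ := by
        rw [mul_sub, sub_mul, Units.inv_mul, one_mul, mul_assoc, Units.mul_inv, mul_one]
    _ = (s - r) • (resolvent a r * resolvent a s) := by
        rw [hvu, mul_smul_comm, mul_one, smul_mul_assoc, spectrum.resolvent_eq hr,
          spectrum.resolvent_eq hs]

end Algebraic

section BanachAlgebra

variable {𝕜 𝒜 : Type*} [NormedField 𝕜] [NormedRing 𝒜] [NormedAlgebra 𝕜 𝒜] [CompleteSpace 𝒜]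
  {a : 𝒜} {z z₀ : 𝕜}

theorem mem_resolventSet_of_norm_sub_mul_lt (h₀ : z₀ ∈ resolventSet 𝕜 a)
    (hz : ‖z - z₀‖ * ‖resolvent a z₀‖ < 1) : z ∈ resolventSet 𝕜 a := by
  have hsmall : ‖-((z - z₀) • resolvent a z₀)‖ < 1 := by rwa [norm_neg, norm_smul]
  have hfactor : algebraMap 𝕜 𝒜 z - a
      = (algebraMap 𝕜 𝒜 z₀ - a) * (1 - -((z - z₀) • resolvent a z₀)) := by
    rw [sub_neg_eq_add, mul_add, mul_one, mul_smul_comm, resolvent, Ring.mul_inverse_cancel _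
      (spectrum.mem_resolventSet_iff.mp h₀), ← Algebra.algebraMap_eq_smul_one, map_sub]
    abel
  rw [spectrum.mem_resolventSet_iff, hfactor]
  exact (spectrum.mem_resolventSet_iff.mp h₀).mul (isUnit_one_sub_of_norm_lt_one hsmall)

theorem norm_resolvent_le_of_norm_sub_lt {M : ℝ} (h₀ : z₀ ∈ resolventSet 𝕜 a)
    (hM : ‖resolvent a z₀‖ ≤ M⁻¹) (hz : ‖z - z₀‖ < M) :
    z ∈ resolventSet 𝕜 a ∧ ‖resolvent a z‖ ≤ (M - ‖z - z₀‖)⁻¹ := by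
  have hM₀ : 0 < M := (norm_nonneg _).trans_lt hz
  have hmem : z ∈ resolventSet 𝕜 a := by
    refine mem_resolventSet_of_norm_sub_mul_lt h₀ ?_
    calc ‖z - z₀‖ * ‖resolvent a z₀‖ ≤ ‖z - z₀‖ * M⁻¹ := by gcongr
      _ < M * M⁻¹ := by gcongr
      _ = 1 := mul_inv_cancel₀ hM₀.ne'
  refine ⟨hmem, ?_⟩
  have hid : ‖resolvent a z‖ ≤ M⁻¹ * (1 + ‖z - z₀‖ * ‖resolvent a z‖) :=
    calc ‖resolvent a z‖
        = ‖resolvent a z₀ - (z - z₀) • (resolvent a z₀ * resolvent a z)‖ := by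
          rw [← resolvent_sub_resolvent_eq_smul_mul h₀ hmem, sub_sub_cancel]
      _ ≤ ‖resolvent a z₀‖ * (1 + ‖z - z₀‖ * ‖resolvent a z‖) := by
          grw [norm_sub_le, norm_smul, norm_mul_le]
          linarith
      _ ≤ M⁻¹ * (1 + ‖z - z₀‖ * ‖resolvent a z‖) := by gcongr
  rw [← one_div, le_div_iff₀ (sub_pos.2 hz)]
  rw [le_inv_mul_iff₀ hM₀] at hid
  linarith

end BanachAlgebra

theorem Complex.exists_norm_sub_ofReal_le (w : ℂ) {ε : ℝ} (hε : 0 < ε) :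
    ∃ t : ℝ, w.re ≤ t ∧ ‖w - t‖ ≤ t - w.re + ε := by
  -- with `s := t - Re w = (Im w)² / 2ε` one has `(s + ε)² = s² + (Im w)² + ε²`
  set s := w.im ^ 2 / (2 * ε)
  have hs : 0 ≤ s := by positivity
  have hsε : s * (2 * ε) = w.im ^ 2 := div_mul_cancel₀ _ (by positivity)
  refine ⟨w.re + s, by linarith, ?_⟩
  rw [← sq_le_sq₀ (norm_nonneg _) (by linarith), ← normSq_eq_norm_sq, normSq_apply]
  simp only [sub_re, sub_im, ofReal_re, ofReal_im]
  nlinarith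

theorem Complex.exp_neg_mul_I_mul_exp_mul_I (t : ℂ) : exp (-t * I) * exp (t * I) = 1 := by
  rw [neg_mul, exp_neg, inv_mul_cancel₀ (exp_ne_zero _)]

theorem Complex.norm_sub_exp_mul_I_mul (θ : ℝ) (z w : ℂ) :
    ‖z - exp (θ * I) * w‖ = ‖exp (-θ * I) * z - w‖ := by
  rw [← one_mul ‖z - _‖, ← norm_exp_ofReal_mul_I (-θ), ← norm_mul, mul_sub, ← mul_assoc,
    ofReal_neg, exp_neg_mul_I_mul_exp_mul_I, one_mul]

theorem Complex.re_exp_neg_mul_I_mul_exp_mul_I_mul_ofReal (θ t : ℝ) :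
    (exp (-θ * I) * (exp (θ * I) * t)).re = t := by
  rw [← mul_assoc, exp_neg_mul_I_mul_exp_mul_I, one_mul, ofReal_re]

theorem le_inv_of_forall_le_inv_sub {r d : ℝ} (hd : 0 < d)
    (h : ∀ ε, 0 < ε → ε < d → r ≤ (d - ε)⁻¹) : r ≤ d⁻¹ := by
  have hlim : Tendsto (fun ε => (d - ε)⁻¹) (𝓝[>] 0) (𝓝 d⁻¹) := by
    have : ContinuousAt (fun ε : ℝ => (d - ε)⁻¹) 0 :=
      (continuousAt_const.sub continuousAt_id).inv₀ (by simpa using hd.ne')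
    simpa using this.tendsto.mono_left nhdsWithin_le_nhds
  refine ge_of_tendsto hlim ?_
  filter_upwards [Ioo_mem_nhdsGT hd] with ε hε using h ε hε.1 hε.2

theorem norm_resolvent_le_of_ray {𝒜 : Type*} [NormedRing 𝒜] [NormedAlgebra ℂ 𝒜] [CompleteSpace 𝒜]
    {a : 𝒜} {θ ω ε : ℝ}
    (hray : ∀ t : ℝ, ω < t → exp (θ * I) * t ∈ resolventSet ℂ a ∧
      ‖resolvent a (exp (θ * I) * t)‖ ≤ 1 / (t - ω))
    {z : ℂ} (hε : 0 < ε) (hεz : ε < (exp (-θ * I) * z).re - ω) :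
    z ∈ resolventSet ℂ a ∧ ‖resolvent a z‖ ≤ ((exp (-θ * I) * z).re - ω - ε)⁻¹ := by
  obtain ⟨t, hwt, hdist⟩ := exists_norm_sub_ofReal_le (exp (-θ * I) * z) hε
  rw [← norm_sub_exp_mul_I_mul] at hdist
  obtain ⟨hmem, hnorm⟩ := hray t (by linarith)
  rw [one_div] at hnorm
  obtain ⟨hz, hbound⟩ := norm_resolvent_le_of_norm_sub_lt hmem hnorm (by linarith)
  exact ⟨hz, hbound.trans (inv_anti₀ (by linarith) (by linarith))⟩

/-- The resolvent estimate on the ray `e^{iθ}(ω, ∞)` is equivalent to the resolvent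
estimate on the whole rotated half plane `H_{θ,ω}`, with the bound `1/dist(z, ∂H_{θ,ω})`. -/
theorem resolvent_estimate_ray_iff_halfPlane (A : X →L[ℂ] X) (θ ω : ℝ) :
    (∀ lam : ℝ, ω < lam →
        (Complex.exp ((θ : ℂ) * Complex.I) * (lam : ℂ)) ∈ resolventSet ℂ A ∧
        ‖resolvent A (Complex.exp ((θ : ℂ) * Complex.I) * (lam : ℂ))‖ ≤ 1 / (lam - ω)) ↔
      (∀ z : ℂ, ω < (Complex.exp (-(θ : ℂ) * Complex.I) * z).re →
        z ∈ resolventSet ℂ A ∧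
        ‖resolvent A z‖ ≤ 1 / ((Complex.exp (-(θ : ℂ) * Complex.I) * z).re - ω)) := by
  constructor
  · intro hray z hz
    have hd : 0 < (exp (-θ * I) * z).re - ω := sub_pos.2 hz
    refine ⟨(norm_resolvent_le_of_ray hray (half_pos hd) (half_lt_self hd)).1, ?_⟩
    rw [one_div]
    exact le_inv_of_forall_le_inv_sub hd fun ε hε hεd => (norm_resolvent_le_of_ray hray hε hεd).2
  · intro hhalf t ht
    simpa only [re_exp_neg_mul_I_mul_exp_mul_I_mul_ofReal] using
      hhalf (exp (θ * I) * t) (by rwa [re_exp_neg_mul_I_mul_exp_mul_I_mul_ofReal])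
end

section
/- Let X be a complex Banach space, let A be a bounded linear operator on X, let θ ∈ ℝ and ω ∈ ℝ. Then the following are equivalent: (i) for every real λ > ω, the point e^{iθ}λ belongs to the resolvent set of A and ‖(e^{iθ}λ·I − A)^{-1}‖ ≤ 1/(λ − ω); (ii) for every x ∈ X there exists j ∈ J(x) such that Re(e^{-iθ}·j(Ax)) ≤ ω‖x‖², and there exists a real λ > ω such that e^{iθ}λ·I − A is surjective. -/
open Complex

variable {X : Type*} [NormedAddCommGroup X] [NormedSpace ℂ X] [CompleteSpace X]

/-!
The substitution `B = e^{-iθ} A - ω` reduces everything to `θ = ω = 0`. A dissipative `B`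
satisfies `λ‖x‖ ≤ ‖(λ - B)x‖`, so wherever `λ - B` is invertible its inverse has norm at most
`1/λ`; by a Neumann series all of `(0, 2μ)` is then resolvent as soon as `μ > 0` is, and
invertibility at one point spreads to the whole half-line. Conversely, the estimate gives
`λ‖x‖ ≤ ‖(λ - B)x‖`, so functionals of norm `≤ 1` norming `(λ - B)x` have `Re g(Bx) ≤ 0` and
almost norm `x` as `λ → ∞`. On the weak-* compact set of such functionals with `Re g(Bx) ≤ 0`
(Banach–Alaoglu), `Re g(x)` therefore attains the value `‖x‖`, and `‖x‖ g ∈ J(x)`.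
-/

section Resolvent

variable {R A : Type*} [CommRing R] [Ring A] [Algebra R A]

theorem Ring.inverse_units_smul (u : Rˣ) (a : A) :
    Ring.inverse (u • a) = u⁻¹ • Ring.inverse a := by
  by_cases ha : IsUnit a
  · have hua : IsUnit (u • a) := (isUnit_smul_iff u a).2 ha
    simpa using (Ring.inverse_mul_eq_iff_eq_mul (u • a) 1 (u⁻¹ • Ring.inverse a) hua).2
      (by rw [smul_mul_smul_comm, mul_inv_cancel, Ring.mul_inverse_cancel a ha, one_smul])
  · rw [Ring.inverse_non_unit a ha, Ring.inverse_non_unit _ (by rwa [isUnit_smul_iff]), smul_zero]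

variable {a b : A} {z w : R} (u : Rˣ)

theorem spectrum.mem_resolventSet_iff_of_algebraMap_sub_eq_smul
    (h : algebraMap R A z - a = u • (algebraMap R A w - b)) :
    z ∈ resolventSet R a ↔ w ∈ resolventSet R b := by
  rw [spectrum.mem_resolventSet_iff, spectrum.mem_resolventSet_iff, h, isUnit_smul_iff]

theorem spectrum.resolvent_eq_smul_of_algebraMap_sub_eq_smul
    (h : algebraMap R A z - a = u • (algebraMap R A w - b)) :
    resolvent a z = u⁻¹ • resolvent b w := by
  rw [resolvent, resolvent, h, Ring.inverse_units_smul]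

end Resolvent

theorem spectrum.mem_resolventSet_of_norm_sub_mul_lt {𝕜 A : Type*} [NormedField 𝕜] [NormedRing A]
    [NormedAlgebra 𝕜 A] [CompleteSpace A] {a : A} {z w : 𝕜} (hz : z ∈ resolventSet 𝕜 a)
    (h : ‖w - z‖ * ‖resolvent a z‖ < 1) : w ∈ resolventSet 𝕜 a := by
  have hsmall : ‖(z - w) • resolvent a z‖ < 1 := by rwa [norm_smul, norm_sub_rev]
  have hfactor : algebraMap 𝕜 A w - a =
      (algebraMap 𝕜 A z - a) * (1 - (z - w) • resolvent a z) := by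
    rw [mul_sub, mul_one, mul_smul_comm, resolvent, Ring.mul_inverse_cancel _ hz,
      Algebra.algebraMap_eq_smul_one, Algebra.algebraMap_eq_smul_one]
    module
  rw [spectrum.mem_resolventSet_iff, hfactor]
  exact hz.mul (Units.oneSub _ hsmall).isUnit

theorem IsCompact.exists_le_of_forall_sub_le {α : Type*} [TopologicalSpace α] {s : Set α}
    (hs : IsCompact s) {f : α → ℝ} (hf : ContinuousOn f s) {c : ℝ}
    (h : ∀ ε > 0, ∃ a ∈ s, c - ε ≤ f a) : ∃ a ∈ s, c ≤ f a := by
  obtain ⟨a, ha, hmax⟩ := hs.exists_isMaxOn (let ⟨a, ha, _⟩ := h 1 one_pos; ⟨a, ha⟩) hf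
  refine ⟨a, ha, le_of_forall_pos_le_add fun ε hε => ?_⟩
  obtain ⟨b, hb, hcb⟩ := h ε hε
  linarith [isMaxOn_iff.1 hmax b hb]

namespace ContinuousLinearMap

variable {𝕜 E : Type*} [NontriviallyNormedField 𝕜] [NormedAddCommGroup E] [NormedSpace 𝕜 E]
  {T : E →L[𝕜] E} {c : ℝ}

theorem norm_ring_inverse_le_inv_iff (hT : IsUnit T) (hc : 0 < c) :
    ‖Ring.inverse T‖ ≤ c⁻¹ ↔ ∀ x, c * ‖x‖ ≤ ‖T x‖ := by
  have hleft (x : E) : Ring.inverse T (T x) = x :=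
    DFunLike.congr_fun (Ring.inverse_mul_cancel T hT) x
  have hright (y : E) : T (Ring.inverse T y) = y :=
    DFunLike.congr_fun (Ring.mul_inverse_cancel T hT) y
  constructor
  · intro h x
    calc c * ‖x‖ = c * ‖Ring.inverse T (T x)‖ := by rw [hleft]
      _ ≤ c * (c⁻¹ * ‖T x‖) := by gcongr; exact (Ring.inverse T).le_of_opNorm_le h _
      _ = ‖T x‖ := by field_simp
  · intro h
    refine opNorm_le_bound _ (by positivity) fun y => ?_
    rw [inv_mul_eq_div, le_div_iff₀' hc]
    simpa [hright] using h (Ring.inverse T y)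

theorem isUnit_of_surjective_of_mul_norm_le [CompleteSpace E] (hs : Function.Surjective T)
    (hc : 0 < c) (h : ∀ x, c * ‖x‖ ≤ ‖T x‖) : IsUnit T := by
  refine T.isUnit_iff_bijective.2 ⟨(injective_iff_map_eq_zero T).2 fun x hx => ?_, hs⟩
  have := h x
  rw [hx, norm_zero] at this
  exact norm_eq_zero.1 (le_antisymm (by nlinarith [norm_nonneg x]) (norm_nonneg x))

end ContinuousLinearMap

section Dissipative

variable {E : Type*} [NormedAddCommGroup E] [NormedSpace ℂ E]

theorem smul_mem_dualitySet_of_le_re {φ : E →L[ℂ] ℂ} (hφ : ‖φ‖ ≤ 1) {x : E}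
    (hx : ‖x‖ ≤ (φ x).re) : (‖x‖ : ℂ) • φ ∈ dualitySet x := by
  have hφx_le : ‖φ x‖ ≤ ‖x‖ := by simpa using φ.le_of_opNorm_le hφ x
  have hφx : φ x = ‖x‖ := by
    rw [eq_coe_norm_of_nonneg (re_eq_norm.1 (le_antisymm (re_le_norm _) (hφx_le.trans hx))),
      le_antisymm hφx_le (hx.trans (re_le_norm _))]
  have hjx : ((‖x‖ : ℂ) • φ) x = (‖x‖ ^ 2 : ℝ) := by
    rw [smul_apply, hφx, smul_eq_mul]; push_cast; ring
  refine ⟨hjx, le_antisymm ?_ ?_⟩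
  · simpa [norm_smul] using mul_le_mul_of_nonneg_left hφ (norm_nonneg x)
  · calc ‖x‖ = ‖((‖x‖ : ℂ) • φ) x‖ / ‖x‖ := by
          rw [hjx, norm_real, Real.norm_of_nonneg (by positivity), sq, mul_self_div_self]
      _ ≤ _ := ContinuousLinearMap.ratio_le_opNorm _ _

def IsDissipative (B : E →L[ℂ] E) : Prop :=
  ∀ x, ∃ j ∈ dualitySet x, (j (B x)).re ≤ 0

theorem isDissipative_smul_sub_algebraMap_iff (A : E →L[ℂ] E) (c : ℂ) (ω : ℝ) :
    IsDissipative (c • A - algebraMap ℂ (E →L[ℂ] E) ω) ↔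
      ∀ x, ∃ j ∈ dualitySet x, (c * j (A x)).re ≤ ω * ‖x‖ ^ 2 :=
  forall_congr' fun x => exists_congr fun j => and_congr_right fun hj => by
    simp only [sub_apply, ContinuousLinearMap.algebraMap_apply, smul_apply, map_sub, map_smul,
      hj.1, smul_eq_mul, sub_re, re_ofReal_mul, ofReal_re, sub_nonpos]

theorem IsDissipative.mul_norm_le_norm_apply {B : E →L[ℂ] E} (hB : IsDissipative B) (lam : ℝ)
    (x : E) : lam * ‖x‖ ≤ ‖(algebraMap ℂ (E →L[ℂ] E) lam - B) x‖ := by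
  obtain ⟨j, ⟨hjx, hj⟩, hjB⟩ := hB x
  rcases (norm_nonneg x).eq_or_lt with hx | hx
  · simp [← hx]
  refine le_of_mul_le_mul_right ?_ hx
  calc lam * ‖x‖ * ‖x‖ ≤ (j ((algebraMap ℂ (E →L[ℂ] E) lam - B) x)).re := by
        rw [sub_apply, ContinuousLinearMap.algebraMap_apply, map_sub, map_smul, hjx, smul_eq_mul,
          sub_re, re_ofReal_mul, ofReal_re]
        nlinarith
    _ ≤ ‖j‖ * ‖(algebraMap ℂ (E →L[ℂ] E) lam - B) x‖ := (re_le_norm _).trans (j.le_opNorm _)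
    _ = _ := by rw [hj, mul_comm]

theorem exists_almost_norming_functional {B : E →L[ℂ] E} {x : E} {lam : ℝ} (hlam : 0 < lam)
    (h : lam * ‖x‖ ≤ ‖(algebraMap ℂ (E →L[ℂ] E) lam - B) x‖) :
    ∃ g : E →L[ℂ] ℂ, ‖g‖ ≤ 1 ∧ (g (B x)).re ≤ 0 ∧ ‖x‖ - ‖B x‖ / lam ≤ (g x).re := by
  obtain ⟨g, hg, hgT⟩ := exists_dual_vector'' ℂ ((algebraMap ℂ (E →L[ℂ] E) lam - B) x)
  have hre : lam * (g x).re - (g (B x)).re = ‖(algebraMap ℂ (E →L[ℂ] E) lam - B) x‖ := by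
    simpa using congrArg re hgT
  have hgx : (g x).re ≤ ‖x‖ := (re_le_norm _).trans (by simpa using g.le_of_opNorm_le hg x)
  have hgB : -‖B x‖ ≤ (g (B x)).re :=
    neg_le_of_abs_le ((abs_re_le_norm _).trans (by simpa using g.le_of_opNorm_le hg (B x)))
  refine ⟨g, hg, by nlinarith, ?_⟩
  rw [sub_le_comm, le_div_iff₀ hlam]
  nlinarith

theorem isDissipative_of_forall_mul_norm_le {B : E →L[ℂ] E}
    (h : ∀ lam : ℝ, 0 < lam → ∀ x, lam * ‖x‖ ≤ ‖(algebraMap ℂ (E →L[ℂ] E) lam - B) x‖) :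
    IsDissipative B := by
  intro x
  let S : Set (WeakDual ℂ E) :=
    WeakDual.toStrongDual ⁻¹' Metric.closedBall 0 1 ∩ {φ | (φ (B x)).re ≤ 0}
  have hS : IsCompact S := (WeakDual.isCompact_closedBall 0 1).inter_right
    (isClosed_le (continuous_re.comp (WeakDual.eval_continuous (B x))) continuous_const)
  have happrox : ∀ ε > 0, ∃ φ ∈ S, ‖x‖ - ε ≤ (φ x).re := by
    intro ε hε
    obtain ⟨g, hg, hgB, hgx⟩ :=
      exists_almost_norming_functional (by positivity) (h (‖B x‖ / ε + 1) (by positivity) x)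
    refine ⟨StrongDual.toWeakDual g, ⟨by simpa using hg, hgB⟩, le_trans ?_ hgx⟩
    gcongr
    rw [div_le_iff₀ (by positivity), mul_add, mul_div_cancel₀ _ hε.ne']
    linarith
  obtain ⟨φ, ⟨hφ, hφB⟩, hφx⟩ :=
    hS.exists_le_of_forall_sub_le (continuous_re.comp (WeakDual.eval_continuous x)).continuousOn
      happrox
  refine ⟨_, smul_mem_dualitySet_of_le_re (φ := WeakDual.toStrongDual φ)
    (by simpa using hφ) hφx, ?_⟩
  simpa using mul_nonpos_of_nonneg_of_nonpos (norm_nonneg x) hφB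

namespace IsDissipative

variable {B : E →L[ℂ] E}

theorem norm_resolvent_le (hB : IsDissipative B) {lam : ℝ} (hlam : 0 < lam)
    (h : (lam : ℂ) ∈ resolventSet ℂ B) :
    ‖resolvent B (lam : ℂ)‖ ≤ lam⁻¹ :=
  (ContinuousLinearMap.norm_ring_inverse_le_inv_iff h hlam).2 (hB.mul_norm_le_norm_apply lam)

variable [CompleteSpace E]

theorem mem_resolventSet_of_lt_two_mul (hB : IsDissipative B) {μ lam : ℝ} (hμ : 0 < μ)
    (hμB : (μ : ℂ) ∈ resolventSet ℂ B) (hlam : 0 < lam) (h : lam < 2 * μ) :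
    (lam : ℂ) ∈ resolventSet ℂ B := by
  refine spectrum.mem_resolventSet_of_norm_sub_mul_lt hμB ?_
  calc ‖(lam : ℂ) - μ‖ * ‖resolvent B (μ : ℂ)‖ ≤ |lam - μ| * μ⁻¹ := by
        rw [← ofReal_sub, norm_real, Real.norm_eq_abs]
        gcongr
        exact hB.norm_resolvent_le hμ hμB
    _ < 1 := by
        rw [← div_eq_mul_inv, div_lt_one hμ, abs_lt]
        constructor <;> linarith

theorem mem_resolventSet (hB : IsDissipative B) {lam₀ lam : ℝ} (h₀ : 0 < lam₀)
    (hs : Function.Surjective (algebraMap ℂ (E →L[ℂ] E) lam₀ - B)) (hlam : 0 < lam) :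
    (lam : ℂ) ∈ resolventSet ℂ B := by
  have hpow : ∀ n : ℕ, (((3 / 2) ^ n * lam₀ : ℝ) : ℂ) ∈ resolventSet ℂ B := by
    intro n
    induction n with
    | zero =>
      simpa [spectrum.mem_resolventSet_iff] using
        ContinuousLinearMap.isUnit_of_surjective_of_mul_norm_le hs h₀ (hB.mul_norm_le_norm_apply lam₀)
    | succ n ih =>
      have : 0 < (3 / 2 : ℝ) ^ n * lam₀ := by positivity
      exact hB.mem_resolventSet_of_lt_two_mul this ih (by positivity) (by rw [pow_succ]; linarith)
  obtain ⟨n, hn⟩ := pow_unbounded_of_one_lt (lam / lam₀) (by norm_num : (1 : ℝ) < 3 / 2)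
  rw [div_lt_iff₀ h₀] at hn
  exact hB.mem_resolventSet_of_lt_two_mul (by positivity) (hpow n) hlam (by linarith)

end IsDissipative

theorem forall_norm_resolvent_le_inv_iff_isDissipative_and_surjective [CompleteSpace E]
    (B : E →L[ℂ] E) :
    (∀ lam : ℝ, 0 < lam → (lam : ℂ) ∈ resolventSet ℂ B ∧ ‖resolvent B (lam : ℂ)‖ ≤ lam⁻¹) ↔
      IsDissipative B ∧ ∃ lam : ℝ, 0 < lam ∧
        Function.Surjective (algebraMap ℂ (E →L[ℂ] E) lam - B) := by
  constructor
  · intro h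
    refine ⟨isDissipative_of_forall_mul_norm_le fun lam hlam =>
        (ContinuousLinearMap.norm_ring_inverse_le_inv_iff (h lam hlam).1 hlam).1 (h lam hlam).2,
      1, one_pos, (ContinuousLinearMap.isUnit_iff_bijective.1 (h 1 one_pos).1).2⟩
  · rintro ⟨hB, lam₀, h₀, hs⟩ lam hlam
    have hρ := hB.mem_resolventSet h₀ hs hlam
    exact ⟨hρ, hB.norm_resolvent_le hlam hρ⟩

end Dissipative

/-- The resolvent estimate on the ray `e^{iθ}(ω, ∞)` is equivalent to a numerical-range
(Lumer–Phillips) condition together with surjectivity of `e^{iθ}λ - A` for some `λ > ω`. -/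
theorem resolvent_estimate_iff_dissipative_and_surjective (A : X →L[ℂ] X) (θ ω : ℝ) :
    (∀ lam : ℝ, ω < lam →
        (Complex.exp ((θ : ℂ) * Complex.I) * (lam : ℂ)) ∈ resolventSet ℂ A ∧
        ‖resolvent A (Complex.exp ((θ : ℂ) * Complex.I) * (lam : ℂ))‖ ≤ 1 / (lam - ω)) ↔
      ((∀ x : X, ∃ j ∈ dualitySet x,
          (Complex.exp (-(θ : ℂ) * Complex.I) * j (A x)).re ≤ ω * ‖x‖ ^ 2) ∧
        ∃ lam : ℝ, ω < lam ∧
          Function.Surjective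
            ⇑((Complex.exp ((θ : ℂ) * Complex.I) * (lam : ℂ)) • (1 : X →L[ℂ] X) - A)) := by
  set u : ℂˣ := Units.mk0 (exp (θ * I)) (exp_ne_zero _)
  set B : X →L[ℂ] X := exp (-θ * I) • A - algebraMap ℂ (X →L[ℂ] X) ω
  have hop (lam : ℝ) : algebraMap ℂ (X →L[ℂ] X) (exp (θ * I) * lam) - A =
      u • (algebraMap ℂ (X →L[ℂ] X) ((lam - ω : ℝ) : ℂ) - B) := by
    have hc : exp (θ * I) * exp (-θ * I) = 1 := by rw [← exp_add]; simp
    simp only [B, u, Units.smul_def, Units.val_mk0, smul_sub, smul_smul, hc, one_smul,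
      Algebra.algebraMap_eq_smul_one]
    push_cast
    module
  have hsurj (lam : ℝ) : Function.Surjective ⇑((exp (θ * I) * lam) • (1 : X →L[ℂ] X) - A) ↔
      Function.Surjective (algebraMap ℂ (X →L[ℂ] X) ((lam - ω : ℝ) : ℂ) - B) := by
    rw [← Algebra.algebraMap_eq_smul_one, hop, FunLike.coe_smul]
    exact Function.Surjective.of_comp_iff' (MulAction.bijective u) _
  calc _ ↔ ∀ lam : ℝ, ω < lam → ((lam - ω : ℝ) : ℂ) ∈ resolventSet ℂ B ∧
        ‖resolvent B ((lam - ω : ℝ) : ℂ)‖ ≤ (lam - ω)⁻¹ := by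
        simp [spectrum.mem_resolventSet_iff_of_algebraMap_sub_eq_smul u (hop _),
          spectrum.resolvent_eq_smul_of_algebraMap_sub_eq_smul u (hop _), Units.smul_def,
          norm_smul, u]
    _ ↔ ∀ μ : ℝ, 0 < μ → (μ : ℂ) ∈ resolventSet ℂ B ∧ ‖resolvent B (μ : ℂ)‖ ≤ μ⁻¹ :=
        ⟨fun h μ hμ => by simpa using h (μ + ω) (by linarith),
          fun h lam hlam => h _ (sub_pos.2 hlam)⟩
    _ ↔ IsDissipative B ∧ ∃ μ : ℝ, 0 < μ ∧
        Function.Surjective (algebraMap ℂ (X →L[ℂ] X) μ - B) :=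
        forall_norm_resolvent_le_inv_iff_isDissipative_and_surjective B
    _ ↔ _ := by
        refine and_congr (isDissipative_smul_sub_algebraMap_iff A _ ω) ⟨?_, ?_⟩
        · rintro ⟨μ, hμ, hs⟩
          exact ⟨μ + ω, by linarith, (hsurj _).2 (by simpa using hs)⟩
        · rintro ⟨lam, hlam, hs⟩
          exact ⟨lam - ω, sub_pos.2 hlam, (hsurj lam).1 hs⟩
end

section
/- Let X be a nontrivial complex Banach space and A a bounded linear operator on X. Then for all complex numbers α and β, σ_n(α·A + β·I) = {α·z + β : z ∈ σ_n(A)}, i.e. the numerical spectrum of α·A + β·I is the image of σ_n(A) under the affine map z ↦ αz + β. -/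
open Complex

variable {X : Type*} [NormedAddCommGroup X] [NormedSpace ℂ X] [CompleteSpace X]

/-!
For `α ≠ 0` the map `z ↦ α z + β` carries `H_{θ,ω}` onto `H_{θ + arg α, ω'}` with
`ω' = |α| ω + Re (e^{-i(θ + arg α)} β)`, multiplying distances to the boundary by `|α|`, while
`R(α w + β, α A + β) = α⁻¹ R(w, A)`; so it carries `ρ_n(A)` onto `ρ_n(α A + β)` and, being
bijective, `σ_n(A)` onto `σ_n(α A + β)`. For `α = 0` this gives `σ_n(β) = β + σ_n(0) = {β}`,
and `σ_n(A)` is nonempty because it contains the spectrum.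
-/

section Resolvent

variable {𝕜 A : Type*} [Field 𝕜] [Ring A] [Algebra 𝕜 A]

theorem resolvent_add_smul_one (a : A) (r s : 𝕜) :
    resolvent (a + s • (1 : A)) (r + s) = resolvent a r := by
  rw [resolvent, resolvent, Algebra.algebraMap_eq_smul_one, Algebra.algebraMap_eq_smul_one,
    add_smul, add_sub_add_right_eq_sub]

theorem resolvent_smul {c : 𝕜} (hc : c ≠ 0) (a : A) (r : 𝕜) :
    resolvent (c • a) (c * r) = c⁻¹ • resolvent a r := by
  simpa [Units.smul_def] using
    (spectrum.units_smul_resolvent (r := (Units.mk0 c hc)⁻¹) (s := r) (a := a)).symm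

theorem resolvent_affine {c : 𝕜} (hc : c ≠ 0) (d : 𝕜) (a : A) (r : 𝕜) :
    resolvent (c • a + d • (1 : A)) (c * r + d) = c⁻¹ • resolvent a r := by
  rw [resolvent_add_smul_one, resolvent_smul hc]

theorem affine_mem_resolventSet_iff {c : 𝕜} (hc : c ≠ 0) (d : 𝕜) {a : A} {r : 𝕜} :
    c * r + d ∈ resolventSet 𝕜 (c • a + d • (1 : A)) ↔ r ∈ resolventSet 𝕜 a := by
  rw [spectrum.isUnit_resolvent, spectrum.isUnit_resolvent, resolvent_affine hc,
    ← Units.smul_mk0 (inv_ne_zero hc), isUnit_smul_iff]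

theorem resolvent_zero {r : 𝕜} (hr : r ≠ 0) : resolvent (0 : A) r = r⁻¹ • (1 : A) := by
  simpa [resolvent] using resolvent_smul hr (0 : A) 1

end Resolvent

theorem mul_div_sub_add_cancel {K : Type*} [Field K] {a : K} (ha : a ≠ 0) (b c : K) :
    a * ((b - c) / a) + c = b := by
  rw [mul_div_cancel₀ _ ha, sub_add_cancel]

section HalfPlane

theorem exp_neg_arg_mul_I_mul (z : ℂ) : exp (-(arg z : ℂ) * I) * z = ‖z‖ := by
  conv_lhs => arg 2; rw [← norm_mul_exp_arg_mul_I z]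
  rw [mul_left_comm, ← exp_add, neg_mul, neg_add_cancel, exp_zero, mul_one]

theorem norm_exp_neg_mul_I (θ : ℝ) : ‖exp (-(θ : ℂ) * I)‖ = 1 := by
  simpa using norm_exp_ofReal_mul_I (-θ)

theorem exp_neg_add_arg_mul_I_mul (θ : ℝ) (α : ℂ) :
    exp (-((θ + arg α : ℝ) : ℂ) * I) * α = ‖α‖ * exp (-(θ : ℂ) * I) := by
  rw [show -((θ + arg α : ℝ) : ℂ) * I = -(θ : ℂ) * I + -(arg α : ℂ) * I by push_cast; ring,
    exp_add, mul_assoc, exp_neg_arg_mul_I_mul, mul_comm]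

theorem re_exp_neg_add_arg_mul_I_mul_affine (θ : ℝ) (α β z : ℂ) :
    (exp (-((θ + arg α : ℝ) : ℂ) * I) * (α * z + β)).re =
      ‖α‖ * (exp (-(θ : ℂ) * I) * z).re + (exp (-((θ + arg α : ℝ) : ℂ) * I) * β).re := by
  rw [mul_add, ← mul_assoc, exp_neg_add_arg_mul_I_mul, mul_assoc, add_re, re_ofReal_mul]

theorem affine_mem_halfPlane_iff {α : ℂ} (hα : α ≠ 0) (β : ℂ) (θ ω : ℝ) {z : ℂ} :
    α * z + β ∈ halfPlane (θ + arg α) (‖α‖ * ω + (exp (-((θ + arg α : ℝ) : ℂ) * I) * β).re) ↔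
      z ∈ halfPlane θ ω := by
  simp only [halfPlane, Set.mem_ofPred_eq, re_exp_neg_add_arg_mul_I_mul_affine,
    add_lt_add_iff_right]
  exact mul_lt_mul_iff_right₀ (norm_pos_iff.mpr hα)

theorem image_affine_halfPlane {α : ℂ} (hα : α ≠ 0) (β : ℂ) (θ ω : ℝ) :
    (fun z => α * z + β) '' halfPlane θ ω =
      halfPlane (θ + arg α) (‖α‖ * ω + (exp (-((θ + arg α : ℝ) : ℂ) * I) * β).re) := by
  ext w
  refine ⟨?_, fun hw => ⟨(w - β) / α, ?_, ?_⟩⟩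
  · rintro ⟨z, hz, rfl⟩
    exact (affine_mem_halfPlane_iff hα β θ ω).mpr hz
  · rwa [← affine_mem_halfPlane_iff hα β, mul_div_sub_add_cancel hα]
  · exact mul_div_sub_add_cancel hα w β

end HalfPlane

section NumericalSpectrum

variable {E : Type*} [NormedAddCommGroup E] [NormedSpace ℂ E]

theorem numResolventSet_subset_resolventSet (A : E →L[ℂ] E) :
    numResolventSet A ⊆ resolventSet ℂ A := fun _ ⟨_, _, hz, hsub, _⟩ => hsub hz

theorem spectrum_subset_numSpectrum (A : E →L[ℂ] E) : spectrum ℂ A ⊆ numSpectrum A :=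
  Set.compl_subset_compl.mpr (numResolventSet_subset_resolventSet A)

theorem numSpectrum_nonempty [CompleteSpace E] [Nontrivial E] (A : E →L[ℂ] E) :
    (numSpectrum A).Nonempty :=
  (spectrum.nonempty A).mono (spectrum_subset_numSpectrum A)

theorem numSpectrum_zero [Nontrivial E] : numSpectrum (0 : E →L[ℂ] E) = {0} := by
  refine Set.Subset.antisymm (fun z hz => ?_) (spectrum.zero_eq (𝕜 := ℂ) (A := E →L[ℂ] E) ▸
    spectrum_subset_numSpectrum 0)
  by_contra hz0
  refine hz ⟨arg z, 0, ?_, fun w hw => ?_, fun w hw => ?_⟩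
  · show 0 < (exp (-(arg z : ℂ) * I) * z).re
    rw [exp_neg_arg_mul_I_mul, ofReal_re]
    exact norm_pos_iff.mpr hz0
  · have hw0 : w ≠ 0 := by rintro rfl; simp [halfPlane] at hw
    have : w ∉ spectrum ℂ (0 : E →L[ℂ] E) := by rwa [spectrum.zero_eq, Set.mem_singleton_iff]
    simpa [spectrum] using this
  · have hw0 : w ≠ 0 := by rintro rfl; simp [halfPlane] at hw
    have hre : (exp (-(arg z : ℂ) * I) * w).re ≤ ‖w‖ := by
      simpa only [norm_mul, norm_exp_neg_mul_I, one_mul] using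
        re_le_norm (exp (-(arg z : ℂ) * I) * w)
    rw [resolvent_zero hw0, norm_smul, norm_one, mul_one, norm_inv, sub_zero, one_div]
    exact inv_anti₀ hw hre

theorem affine_mem_numResolventSet {A : E →L[ℂ] E} {α : ℂ} (hα : α ≠ 0) (β : ℂ) {z : ℂ}
    (hz : z ∈ numResolventSet A) : α * z + β ∈ numResolventSet (α • A + β • (1 : E →L[ℂ] E)) := by
  obtain ⟨θ, ω, hz, hsub, hbound⟩ := hz
  refine ⟨θ + arg α, ‖α‖ * ω + (exp (-((θ + arg α : ℝ) : ℂ) * I) * β).re, ?_, ?_, ?_⟩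
  · exact (affine_mem_halfPlane_iff hα β θ ω).mpr hz
  · rw [← image_affine_halfPlane hα, Set.image_subset_iff]
    exact fun w hw => (affine_mem_resolventSet_iff hα β).mpr (hsub hw)
  · rw [← image_affine_halfPlane hα, Set.forall_mem_image]
    intro w hw
    calc ‖resolvent (α • A + β • (1 : E →L[ℂ] E)) (α * w + β)‖
        = ‖α‖⁻¹ * ‖resolvent A w‖ := by rw [resolvent_affine hα, norm_smul, norm_inv]
      _ ≤ ‖α‖⁻¹ * (1 / ((exp (-(θ : ℂ) * I) * w).re - ω)) := by gcongr; exact hbound w hw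
      _ = _ := by
        rw [re_exp_neg_add_arg_mul_I_mul_affine, add_sub_add_right_eq_sub, ← mul_sub, one_div,
          one_div, mul_inv]

theorem numResolventSet_affine (A : E →L[ℂ] E) {α : ℂ} (hα : α ≠ 0) (β : ℂ) :
    numResolventSet (α • A + β • (1 : E →L[ℂ] E)) =
      (fun z => α * z + β) '' numResolventSet A := by
  refine Set.Subset.antisymm
    (fun w hw => ⟨(w - β) / α, ?_, mul_div_sub_add_cancel hα w β⟩)
    (Set.image_subset_iff.mpr fun z hz => affine_mem_numResolventSet hα β hz)
  convert affine_mem_numResolventSet (inv_ne_zero hα) (-β / α) hw using 2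
  · match_scalars
    · field_simp
    · field_simp; ring
  · field_simp; ring

theorem numSpectrum_affine_of_ne_zero (A : E →L[ℂ] E) {α : ℂ} (hα : α ≠ 0) (β : ℂ) :
    numSpectrum (α • A + β • (1 : E →L[ℂ] E)) = (fun z => α * z + β) '' numSpectrum A := by
  have hf : Function.Bijective fun z : ℂ => α * z + β :=
    ⟨fun z z' h => mul_left_cancel₀ hα (add_right_cancel h),
      fun w => ⟨(w - β) / α, mul_div_sub_add_cancel hα w β⟩⟩
  rw [numSpectrum, numSpectrum, numResolventSet_affine A hα, Set.image_compl_eq hf]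

end NumericalSpectrum

/-- Affine covariance of the numerical spectrum:
`σ_n(α A + β) = α σ_n(A) + β`. -/
theorem numSpectrum_affine [Nontrivial X] (A : X →L[ℂ] X) (α β : ℂ) :
    numSpectrum (α • A + β • (1 : X →L[ℂ] X)) =
      (fun z : ℂ => α * z + β) '' numSpectrum A := by
  rcases eq_or_ne α 0 with rfl | hα
  · have hscalar := numSpectrum_affine_of_ne_zero (0 : X →L[ℂ] X) one_ne_zero β
    rw [smul_zero, zero_add, numSpectrum_zero, Set.image_singleton, mul_zero, zero_add]
      at hscalar
    simp_rw [zero_smul, zero_add, zero_mul, zero_add]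
    rw [hscalar, (numSpectrum_nonempty A).image_const]
  · exact numSpectrum_affine_of_ne_zero A hα β
end

section
/- Let X be a complex Banach space and A a bounded linear operator on X. Then σ_n(A) = closure(convexHull({j(Ax) : x ∈ X, ‖x‖ = 1, j ∈ J(x)})) ∪ σ_r(A), where σ_r(A) := {λ ∈ ℂ : the range of λ·I − A is not dense in X} is the residual spectrum of A. -/
open Complex

variable {X : Type*} [NormedAddCommGroup X] [NormedSpace ℂ X] [CompleteSpace X]

open Topology Filter

/-!
Write `c = e^{-iθ}` and `d(w) = Re (c w) - ω` for the signed distance from `w` to `∂H_{θ,ω}`.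

If `H_{θ,ω}` witnesses `z ∈ ρ_n(A)`, then `z - A` is invertible, so has dense range. For a unit
vector `x`, `j ∈ J(x)` and `s > 0`, the vector `y = c⁻¹ R(c⁻¹ (ω + s), A) x` has `‖y‖ ≤ 1 / s` and
solves `(s - B) y = x` for `B = c A - ω`; applying `j` to `x` and to `B x` gives
`Re j(B x) ≤ ‖B‖² / s`. So the numerical range, and with it its closed convex hull, lies in the
closed half plane `ℂ \ H_{θ,ω}`.

Conversely, if `z` is outside the closed convex hull and `z - A` has dense range, separate `z` from
the hull by a half plane `H_{θ,ω} ∋ z`. Testing `(w - A) x` against a duality functional of `x`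
gives `‖(w - A) x‖ ≥ d(w) ‖x‖`: this yields the resolvent bound wherever `w - A` is invertible, and
the invertibility of `z - A`. As the resolvent stays bounded near every point of `H_{θ,ω}`, the
resolvent set is relatively closed in the connected set `H_{θ,ω}`, hence contains it.
-/

theorem ContinuousLinearMap.mul_norm_le_norm_apply_of_norm_eq_one {𝕜 E : Type*} [RCLike 𝕜]
    [NormedAddCommGroup E] [NormedSpace 𝕜 E] {T : E →L[𝕜] E} {d : ℝ}
    (hT : ∀ y, ‖y‖ = 1 → d ≤ ‖T y‖) (x : E) : d * ‖x‖ ≤ ‖T x‖ := by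
  rcases eq_or_ne x 0 with rfl | hx
  · simp
  have hnx : 0 < ‖x‖ := norm_pos_iff.mpr hx
  have h := hT _ (norm_smul_inv_norm (𝕜 := 𝕜) hx)
  rw [map_smul, norm_smul, norm_inv, RCLike.norm_ofReal, abs_of_pos hnx,
    le_inv_mul_iff₀ hnx] at h
  linarith

section Operator

variable {𝕜 E : Type*} [NontriviallyNormedField 𝕜] [NormedAddCommGroup E] [NormedSpace 𝕜 E]
  {T : E →L[𝕜] E}

theorem ContinuousLinearMap.norm_ringInverse_le {d : ℝ} (hd : 0 < d)
    (hT : ∀ x, d * ‖x‖ ≤ ‖T x‖) : ‖Ring.inverse T‖ ≤ d⁻¹ := by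
  by_cases hu : IsUnit T
  · obtain ⟨u, rfl⟩ := hu
    rw [Ring.inverse_unit]
    refine opNorm_le_bound _ (by positivity) fun y ↦ ?_
    have h := hT ((↑u⁻¹ : E →L[𝕜] E) y)
    rw [← mul_apply_eq_comp, Units.mul_inv, one_apply_eq_self] at h
    rw [inv_mul_eq_div, le_div_iff₀ hd]
    linarith
  · rw [Ring.inverse_non_unit _ hu, norm_zero]
    positivity

theorem ContinuousLinearMap.isUnit_of_denseRange_of_mul_norm_le [CompleteSpace E] {d : ℝ}
    (hd : 0 < d) (hT : ∀ x, d * ‖x‖ ≤ ‖T x‖) (hdense : DenseRange T) : IsUnit T := by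
  refine isUnit_iff_bijective.mpr <| (bijective_iff_dense_range_and_antilipschitz T).mpr
    ⟨?_, (⟨d⁻¹, by positivity⟩ : NNReal), T.antilipschitz_of_bound fun x ↦ ?_⟩
  · rw [← Submodule.dense_iff_topologicalClosure_eq_top, LinearMap.coe_range, coe_coe]
    exact hdense
  · change ‖x‖ ≤ d⁻¹ * ‖T x‖
    rw [inv_mul_eq_div, le_div_iff₀ hd, mul_comm]
    exact hT x

theorem denseRange_smul_one_sub_of_mem_resolventSet {z : 𝕜} (hz : z ∈ resolventSet 𝕜 T) :
    DenseRange (z • (1 : E →L[𝕜] E) - T) := by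
  rw [spectrum.mem_resolventSet_iff, Algebra.algebraMap_eq_smul_one] at hz
  obtain ⟨u, hu⟩ := hz
  refine Function.Surjective.denseRange fun y ↦ ⟨(↑u⁻¹ : E →L[𝕜] E) y, ?_⟩
  rw [← hu, ← mul_apply_eq_comp, Units.mul_inv, one_apply_eq_self]

theorem smul_resolvent_apply_sub {z : 𝕜} (hz : z ∈ resolventSet 𝕜 T) (x : E) :
    z • resolvent T z x - T (resolvent T z x) = x := by
  have h := congrArg (· x) (Ring.mul_inverse_cancel _ (spectrum.mem_resolventSet_iff.mp hz))
  simpa [resolvent, Algebra.algebraMap_eq_smul_one] using h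

end Operator

section Resolvent

variable {𝕜 A : Type*} [NontriviallyNormedField 𝕜] [NormedRing A] [NormedAlgebra 𝕜 A]
  [HasSummableGeomSeries A] {a : A}

theorem mem_resolventSet_of_norm_sub_mul_norm_resolvent_lt {μ ν : 𝕜}
    (hμ : μ ∈ resolventSet 𝕜 a) (h : ‖ν - μ‖ * ‖resolvent a μ‖ < 1) :
    ν ∈ resolventSet 𝕜 a := by
  have hsmall : ‖(μ - ν) • resolvent a μ‖ < 1 := by
    rwa [norm_smul, norm_sub_rev]
  have hfactor : algebraMap 𝕜 A ν - a =
      (algebraMap 𝕜 A μ - a) * (1 - (μ - ν) • resolvent a μ) := by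
    rw [mul_sub, mul_one, mul_smul_comm, resolvent,
      Ring.mul_inverse_cancel _ (spectrum.mem_resolventSet_iff.mp hμ),
      Algebra.algebraMap_eq_smul_one μ, Algebra.algebraMap_eq_smul_one ν, sub_smul]
    abel
  rw [spectrum.mem_resolventSet_iff, hfactor]
  exact (spectrum.mem_resolventSet_iff.mp hμ).mul (isUnit_one_sub_of_norm_lt_one hsmall)

theorem mem_resolventSet_of_mem_closure_of_norm_resolvent_le {ν : 𝕜}
    (hν : ν ∈ closure (resolventSet 𝕜 a)) {C : ℝ} (hC : ∀ᶠ μ in 𝓝 ν, ‖resolvent a μ‖ ≤ C) :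
    ν ∈ resolventSet 𝕜 a := by
  have hε : 0 < (|C| + 1)⁻¹ := by positivity
  obtain ⟨μ, ⟨hμC, hμν⟩, hμ⟩ :=
    mem_closure_iff_nhds.mp hν _ (hC.and (Metric.ball_mem_nhds ν hε))
  refine mem_resolventSet_of_norm_sub_mul_norm_resolvent_lt hμ ?_
  rw [dist_comm, dist_eq_norm] at hμν
  calc ‖ν - μ‖ * ‖resolvent a μ‖ ≤ (|C| + 1)⁻¹ * |C| := by
        gcongr
        exact hμC.trans (le_abs_self C)
    _ < 1 := by
        rw [inv_mul_lt_iff₀ (by positivity)]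
        linarith

end Resolvent

section HalfPlane

-- The signed distance from `z` to the line `∂H_{θ,ω}`.
noncomputable def halfPlaneDist (θ ω : ℝ) (z : ℂ) : ℝ :=
  (Complex.exp (-(θ : ℂ) * Complex.I) * z).re - ω

theorem norm_exp_neg_ofReal_mul_I (θ : ℝ) : ‖Complex.exp (-(θ : ℂ) * Complex.I)‖ = 1 := by
  rw [← Complex.ofReal_neg, Complex.norm_exp_ofReal_mul_I]

theorem exists_exp_neg_ofReal_mul_I_eq {c : ℂ} (hc : ‖c‖ = 1) :
    ∃ θ : ℝ, Complex.exp (-(θ : ℂ) * Complex.I) = c :=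
  ⟨-Complex.arg c, by simpa [hc] using Complex.norm_mul_exp_arg_mul_I c⟩

theorem mem_halfPlane_iff {θ ω : ℝ} {z : ℂ} : z ∈ halfPlane θ ω ↔ 0 < halfPlaneDist θ ω z := by
  rw [halfPlaneDist, sub_pos]
  rfl

theorem continuous_halfPlaneDist (θ ω : ℝ) : Continuous (halfPlaneDist θ ω) := by
  unfold halfPlaneDist
  fun_prop

theorem isOpen_halfPlane (θ ω : ℝ) : IsOpen (halfPlane θ ω) :=
  isOpen_lt continuous_const (Complex.continuous_re.comp (continuous_const_mul _))

theorem isLinearMap_re_mul (c : ℂ) : IsLinearMap ℝ fun z : ℂ ↦ (c * z).re where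
  map_add z w := by rw [mul_add, Complex.add_re]
  map_smul r z := by rw [Complex.real_smul, mul_left_comm, Complex.re_ofReal_mul, smul_eq_mul]

theorem convex_halfPlane (θ ω : ℝ) : Convex ℝ (halfPlane θ ω) :=
  convex_halfSpace_gt (isLinearMap_re_mul _) ω

theorem compl_halfPlane (θ ω : ℝ) :
    (halfPlane θ ω)ᶜ = {z : ℂ | (Complex.exp (-(θ : ℂ) * Complex.I) * z).re ≤ ω} := by
  ext z
  simp [halfPlane]

theorem closure_convexHull_subset_compl_halfPlane {θ ω : ℝ} {s : Set ℂ}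
    (hs : s ⊆ (halfPlane θ ω)ᶜ) : closure (convexHull ℝ s) ⊆ (halfPlane θ ω)ᶜ := by
  refine closure_minimal (convexHull_min hs ?_) (isOpen_halfPlane θ ω).isClosed_compl
  rw [compl_halfPlane]
  exact convex_halfSpace_le (isLinearMap_re_mul _) ω

theorem exists_halfPlane_separating {s : Set ℂ} (hs : Convex ℝ s) (hsc : IsClosed s) {z : ℂ}
    (hz : z ∉ s) : ∃ θ ω : ℝ, z ∈ halfPlane θ ω ∧ s ⊆ (halfPlane θ ω)ᶜ := by
  rcases s.eq_empty_or_nonempty with rfl | ⟨a, ha⟩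
  · exact ⟨0, z.re - 1, by simp [halfPlane], Set.empty_subset _⟩
  obtain ⟨f, u, hfs, hfz⟩ := geometric_hahn_banach_closed_point hs hsc hz
  set g : ℂ := (InnerProductSpace.toDual ℝ ℂ).symm f
  have hf : ∀ w, f w = (w * starRingEnd ℂ g).re := fun w ↦ by
    rw [← Complex.inner, InnerProductSpace.toDual_symm_apply]
  have hg : g ≠ 0 := by
    intro hg
    have := (hfs a ha).trans hfz
    rw [hf, hf, hg] at this
    simp at this
  have hng : 0 < ‖g‖ := norm_pos_iff.mpr hg
  obtain ⟨θ, hθ⟩ := exists_exp_neg_ofReal_mul_I_eq (c := starRingEnd ℂ g / ‖g‖) (by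
    rw [norm_div, Complex.norm_conj, Complex.norm_real, norm_norm, div_self hng.ne'])
  have hre : ∀ w, (Complex.exp (-(θ : ℂ) * Complex.I) * w).re = f w / ‖g‖ := fun w ↦ by
    rw [hθ, hf, div_mul_eq_mul_div, mul_comm, Complex.div_ofReal_re]
  refine ⟨θ, u / ‖g‖, ?_, fun w hw ↦ ?_⟩
  · change u / ‖g‖ < _
    rw [hre]
    gcongr
  · rw [compl_halfPlane, Set.mem_ofPred_eq, hre]
    gcongr
    exact (hfs w hw).le

end HalfPlane

section NumericalRange

variable {E : Type*} [NormedAddCommGroup E] [NormedSpace ℂ E]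

def numericalRange (A : E →L[ℂ] E) : Set ℂ :=
  {z : ℂ | ∃ x : E, ∃ j ∈ dualitySet x, ‖x‖ = 1 ∧ z = j (A x)}

theorem dualitySet_nonempty (x : E) : (dualitySet x).Nonempty := by
  rcases eq_or_ne x 0 with rfl | hx
  · exact ⟨0, by simp [dualitySet]⟩
  obtain ⟨g, hg, hgx⟩ := exists_dual_vector ℂ x (norm_ne_zero_iff.mpr hx)
  refine ⟨(‖x‖ : ℂ) • g, ?_, ?_⟩
  · rw [smul_apply, hgx, smul_eq_mul, Complex.ofReal_pow]
    exact (sq _).symm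
  · rw [norm_smul, hg, Complex.norm_real, norm_norm, mul_one]

theorem mem_dualitySet_iff_of_norm_eq_one {x : E} (hx : ‖x‖ = 1) {j : E →L[ℂ] ℂ} :
    j ∈ dualitySet x ↔ j x = 1 ∧ ‖j‖ = 1 := by
  simp [dualitySet, hx]

theorem ContinuousLinearMap.re_apply_le_zero_of_forall_exists_preimage (B : E →L[ℂ] E)
    {x : E} {j : E →L[ℂ] ℂ} (hjx : j x = 1) (hj : ‖j‖ ≤ 1)
    (h : ∀ s : ℝ, 0 < s → ∃ y, ‖y‖ ≤ s⁻¹ ∧ (s : ℂ) • y - B y = x) : (j (B x)).re ≤ 0 := by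
  have hbound : ∀ s : ℝ, 0 < s → (j (B x)).re ≤ ‖B‖ ^ 2 / s := by
    intro s hs
    obtain ⟨y, hy, rfl⟩ := h s hs
    have hjBy : j (B y) = s * j y - 1 := by
      rw [← hjx, map_sub, map_smul, smul_eq_mul, sub_sub_cancel]
    have hjBx : j (B ((s : ℂ) • y - B y)) = (s : ℂ) ^ 2 * j y - s - j (B (B y)) := by
      rw [map_sub, map_smul, map_sub, map_smul, smul_eq_mul, hjBy]
      ring
    have hjy : ‖(s : ℂ) ^ 2 * j y‖ ≤ s := calc
      ‖(s : ℂ) ^ 2 * j y‖ ≤ s ^ 2 * ‖y‖ := by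
        rw [norm_mul, norm_pow, Complex.norm_real, Real.norm_of_nonneg hs.le]
        gcongr
        simpa using j.le_of_opNorm_le hj y
      _ ≤ s ^ 2 * s⁻¹ := by gcongr
      _ = s := by field_simp
    have hjBBy : ‖j (B (B y))‖ ≤ ‖B‖ ^ 2 / s := calc
      ‖j (B (B y))‖ ≤ ‖B‖ * (‖B‖ * ‖y‖) := by
        refine (j.le_of_opNorm_le hj _).trans ?_
        rw [one_mul]
        exact B.le_opNorm_of_le (B.le_opNorm y)
      _ ≤ ‖B‖ * (‖B‖ * s⁻¹) := by gcongr
      _ = ‖B‖ ^ 2 / s := by ring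
    rw [hjBx, Complex.sub_re, Complex.sub_re, Complex.ofReal_re]
    linarith [Complex.re_le_norm ((s : ℂ) ^ 2 * j y), Complex.abs_re_le_norm (j (B (B y))),
      neg_abs_le (j (B (B y))).re]
  exact ge_of_tendsto (tendsto_const_div_atTop_nhds_zero_nat (‖B‖ ^ 2))
    ((eventually_gt_atTop 0).mono fun n hn ↦ hbound n (Nat.cast_pos.mpr hn))

variable {A : E →L[ℂ] E} {θ ω : ℝ}

theorem numericalRange_subset_compl_halfPlane (hρ : halfPlane θ ω ⊆ resolventSet ℂ A)
    (hR : ∀ w ∈ halfPlane θ ω, ‖resolvent A w‖ ≤ 1 / halfPlaneDist θ ω w) :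
    numericalRange A ⊆ (halfPlane θ ω)ᶜ := by
  rintro _ ⟨x, j, hj, hx, rfl⟩
  obtain ⟨hjx, hjn⟩ := (mem_dualitySet_iff_of_norm_eq_one hx).mp hj
  set c := Complex.exp (-(θ : ℂ) * Complex.I) with hc
  have hc0 : c ≠ 0 := Complex.exp_ne_zero _
  have key := (c • A - (ω : ℂ) • 1).re_apply_le_zero_of_forall_exists_preimage hjx hjn.le
    fun s hs ↦ by
      set w := c⁻¹ * (ω + s)
      have hw : halfPlaneDist θ ω w = s := by
        rw [halfPlaneDist, ← hc, mul_inv_cancel_left₀ hc0]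
        simp
      have hwH : w ∈ halfPlane θ ω := mem_halfPlane_iff.mpr (hw ▸ hs)
      refine ⟨c⁻¹ • resolvent A w x, ?_, ?_⟩
      · calc ‖c⁻¹ • resolvent A w x‖ = ‖resolvent A w x‖ := by
              rw [norm_smul, norm_inv, hc, norm_exp_neg_ofReal_mul_I, inv_one, one_mul]
          _ ≤ ‖resolvent A w‖ := by simpa [hx] using (resolvent A w).le_opNorm x
          _ ≤ s⁻¹ := by simpa [hw] using hR w hwH
      · conv_rhs => rw [← smul_resolvent_apply_sub (hρ hwH) x]
        simp only [sub_apply, smul_apply, map_smul, one_apply_eq_self, smul_sub, smul_smul,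
          inv_mul_cancel₀ hc0, one_smul, w]
        module
  rw [compl_halfPlane, Set.mem_ofPred_eq, ← hc]
  simpa [hjx] using key

theorem halfPlaneDist_mul_norm_le (hW : numericalRange A ⊆ (halfPlane θ ω)ᶜ) (w : ℂ) (x : E) :
    halfPlaneDist θ ω w * ‖x‖ ≤ ‖(w • (1 : E →L[ℂ] E) - A) x‖ := by
  refine ContinuousLinearMap.mul_norm_le_norm_apply_of_norm_eq_one (fun y hy ↦ ?_) x
  obtain ⟨j, hj⟩ := dualitySet_nonempty y
  obtain ⟨hjy, hjn⟩ := (mem_dualitySet_iff_of_norm_eq_one hy).mp hj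
  set c := Complex.exp (-(θ : ℂ) * Complex.I) with hc
  have hjW : (c * j (A y)).re ≤ ω := by
    have := hW ⟨y, j, hj, hy, rfl⟩
    rwa [compl_halfPlane] at this
  calc halfPlaneDist θ ω w ≤ (c * (w - j (A y))).re := by
        rw [halfPlaneDist, mul_sub, Complex.sub_re]
        linarith
    _ ≤ ‖c * (w - j (A y))‖ := Complex.re_le_norm _
    _ = ‖j ((w • (1 : E →L[ℂ] E) - A) y)‖ := by
        rw [norm_mul, hc, norm_exp_neg_ofReal_mul_I, one_mul]
        simp [hjy]
    _ ≤ ‖(w • (1 : E →L[ℂ] E) - A) y‖ := by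
        simpa [hjn] using j.le_opNorm ((w • (1 : E →L[ℂ] E) - A) y)

theorem norm_resolvent_le_one_div_halfPlaneDist (hW : numericalRange A ⊆ (halfPlane θ ω)ᶜ)
    {w : ℂ} (hw : w ∈ halfPlane θ ω) : ‖resolvent A w‖ ≤ 1 / halfPlaneDist θ ω w := by
  rw [one_div, resolvent, Algebra.algebraMap_eq_smul_one]
  exact ContinuousLinearMap.norm_ringInverse_le (mem_halfPlane_iff.mp hw)
    (halfPlaneDist_mul_norm_le hW w)

variable [CompleteSpace E]

theorem mem_resolventSet_of_denseRange (hW : numericalRange A ⊆ (halfPlane θ ω)ᶜ) {z : ℂ}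
    (hz : z ∈ halfPlane θ ω) (hdense : DenseRange (z • (1 : E →L[ℂ] E) - A)) :
    z ∈ resolventSet ℂ A := by
  rw [spectrum.mem_resolventSet_iff, Algebra.algebraMap_eq_smul_one]
  exact ContinuousLinearMap.isUnit_of_denseRange_of_mul_norm_le (mem_halfPlane_iff.mp hz)
    (halfPlaneDist_mul_norm_le hW z) hdense

theorem halfPlane_subset_resolventSet (hW : numericalRange A ⊆ (halfPlane θ ω)ᶜ) {z : ℂ}
    (hz : z ∈ halfPlane θ ω) (hzρ : z ∈ resolventSet ℂ A) :
    halfPlane θ ω ⊆ resolventSet ℂ A := by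
  refine (convex_halfPlane θ ω).isPreconnected.subset_of_closure_inter_subset
    (spectrum.isOpen_resolventSet A) ⟨z, hz, hzρ⟩ fun w ⟨hwρ, hw⟩ ↦ ?_
  have hd := mem_halfPlane_iff.mp hw
  refine mem_resolventSet_of_mem_closure_of_norm_resolvent_le hwρ
    (C := 2 / halfPlaneDist θ ω w) ?_
  filter_upwards [(continuous_halfPlaneDist θ ω).continuousAt.eventually
    (lt_mem_nhds (half_lt_self hd))] with μ hμ
  calc ‖resolvent A μ‖ ≤ 1 / halfPlaneDist θ ω μ :=
        norm_resolvent_le_one_div_halfPlaneDist hW (mem_halfPlane_iff.mpr (by linarith))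
    _ ≤ 1 / (halfPlaneDist θ ω w / 2) := by gcongr
    _ = 2 / halfPlaneDist θ ω w := one_div_div _ _

theorem mem_numResolventSet_of_denseRange (hW : numericalRange A ⊆ (halfPlane θ ω)ᶜ) {z : ℂ}
    (hz : z ∈ halfPlane θ ω) (hdense : DenseRange (z • (1 : E →L[ℂ] E) - A)) :
    z ∈ numResolventSet A :=
  ⟨θ, ω, hz, halfPlane_subset_resolventSet hW hz (mem_resolventSet_of_denseRange hW hz hdense),
    fun _ hw ↦ norm_resolvent_le_one_div_halfPlaneDist hW hw⟩

end NumericalRange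

/-- `σ_n(A)` equals the closed convex hull of the numerical range together with the
residual spectrum. -/
theorem numSpectrum_eq_closure_convexHull_union_residual (A : X →L[ℂ] X) :
    numSpectrum A =
      closure (convexHull ℝ
          {z : ℂ | ∃ x : X, ∃ j ∈ dualitySet x, ‖x‖ = 1 ∧ z = j (A x)}) ∪
        {lam : ℂ | ¬ DenseRange ⇑(lam • (1 : X →L[ℂ] X) - A)} := by
  ext z
  change z ∉ numResolventSet A ↔ z ∈ closure (convexHull ℝ (numericalRange A)) ∨
    ¬ DenseRange ⇑(z • (1 : X →L[ℂ] X) - A)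
  rw [← not_iff_not, not_not, not_or, not_not]
  constructor
  · rintro ⟨θ, ω, hz, hρ, hR⟩
    exact ⟨fun hcl ↦ closure_convexHull_subset_compl_halfPlane
      (numericalRange_subset_compl_halfPlane hρ hR) hcl hz,
      denseRange_smul_one_sub_of_mem_resolventSet (hρ hz)⟩
  · rintro ⟨hz, hdense⟩
    obtain ⟨θ, ω, hzH, hsep⟩ :=
      exists_halfPlane_separating (convex_convexHull ℝ _).closure isClosed_closure hz
    exact mem_numResolventSet_of_denseRange
      ((subset_convexHull ℝ _).trans subset_closure |>.trans hsep) hzH hdense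
end

section
/- Let Ω be a nonempty closed convex subset of ℂ. Then at least one of the following holds: (1) Ω = ℂ; (2) Ω is a closed half plane, i.e. there exist θ, ω ∈ ℝ with Ω = {z ∈ ℂ : Re(e^{-iθ}z) ≤ ω}; (3) Ω is contained in a sector, i.e. there exist θ ∈ ℝ, δ with 0 < δ < π/2, and z₀ ∈ ℂ with Ω ⊆ {z₀ + e^{-iθ}λ : λ ∈ ℂ, |arg λ| ≤ δ}; (4) Ω is contained in a strip, i.e. there exist θ ∈ ℝ and real numbers ω₁ ≤ ω₂ with Ω ⊆ {z ∈ ℂ : ω₁ ≤ Re(e^{iθ}z) ≤ ω₂}; (5) Ω is compact. -/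
/-!
Let `B` be the barrier cone of `Ω`: the vectors `w` for which `z ↦ ⟪w, z⟫` is bounded above on
`Ω`. By Hahn–Banach, every point outside `Ω` is cut off by some `w ∈ B`. If `B` contains two
linearly independent vectors, `Ω` lies in the wedge they cut out, a sector of opening less than
`π`. Otherwise `B` lies on a line: if it contains a pair `w, -w` with `w ≠ 0`, then `Ω` lies in a
strip; if not, `B` is a ray `ℝ≥0 • w`, and Hahn–Banach makes `Ω` the half plane
`⟪w, z⟫ ≤ sup_Ω ⟪w, ·⟫` (all of `ℂ` when `w = 0`).
-/

open Complex
open scoped RealInnerProductSpace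

section InnerProductSpace

variable {E : Type*} [NormedAddCommGroup E] [InnerProductSpace ℝ E]

def barrierCone (Ω : Set E) : Set E := {w | BddAbove ((fun z => ⟪w, z⟫) '' Ω)}

theorem mem_barrierCone {Ω : Set E} {w : E} :
    w ∈ barrierCone Ω ↔ ∃ c, ∀ z ∈ Ω, ⟪w, z⟫ ≤ c := by
  simp [barrierCone, BddAbove, upperBounds, Set.Nonempty]

theorem smul_mem_barrierCone {Ω : Set E} {w : E} (hw : w ∈ barrierCone Ω) {r : ℝ} (hr : 0 ≤ r) :
    r • w ∈ barrierCone Ω := by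
  obtain ⟨c, hc⟩ := mem_barrierCone.mp hw
  exact mem_barrierCone.mpr ⟨r * c, fun z hz => by
    rw [real_inner_smul_left]; exact mul_le_mul_of_nonneg_left (hc z hz) hr⟩

theorem exists_inner_lt_of_notMem [CompleteSpace E] {Ω : Set E} (hclosed : IsClosed Ω)
    (hconv : Convex ℝ Ω) {p : E} (hp : p ∉ Ω) :
    ∃ w c, (∀ z ∈ Ω, ⟪w, z⟫ < c) ∧ c < ⟪w, p⟫ := by
  obtain ⟨f, c, hf, hpf⟩ := geometric_hahn_banach_closed_point hconv hclosed hp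
  refine ⟨(InnerProductSpace.toDual ℝ E).symm f, c, fun z hz => ?_, ?_⟩ <;>
    rw [InnerProductSpace.toDual_symm_apply]
  exacts [hf z hz, hpf]

theorem exists_eq_setOf_inner_le [CompleteSpace E] {Ω : Set E} (hne : Ω.Nonempty)
    (hclosed : IsClosed Ω) (hconv : Convex ℝ Ω) {w : E} (hw : w ∈ barrierCone Ω)
    (hray : ∀ w' ∈ barrierCone Ω, ∃ r : ℝ, 0 ≤ r ∧ w' = r • w) :
    ∃ c, Ω = {z | ⟪w, z⟫ ≤ c} := by
  refine ⟨sSup ((fun z => ⟪w, z⟫) '' Ω),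
    Set.Subset.antisymm (fun z hz => le_csSup hw ⟨z, hz, rfl⟩) fun p hp => ?_⟩
  by_contra hpΩ
  obtain ⟨w', c, hlt, hcp⟩ := exists_inner_lt_of_notMem hclosed hconv hpΩ
  obtain ⟨r, hr, rfl⟩ := hray w' (mem_barrierCone.mpr ⟨c, fun z hz => (hlt z hz).le⟩)
  simp only [real_inner_smul_left] at hlt hcp
  obtain ⟨a, ha⟩ := hne
  obtain rfl | hr := hr.eq_or_lt
  · simp only [zero_mul] at hlt hcp
    linarith [hlt a ha]
  have hsup : sSup ((fun z => ⟪w, z⟫) '' Ω) ≤ c / r := by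
    refine csSup_le ⟨_, a, ha, rfl⟩ ?_
    rintro _ ⟨z, hz, rfl⟩
    rw [le_div_iff₀' hr]
    exact (hlt z hz).le
  rw [← div_lt_iff₀' hr] at hcp
  exact (hsup.trans_lt hcp).not_ge hp

theorem exists_mem_barrierCone_forall_eq_nonneg_smul {Ω : Set E}
    (hindep : ∀ w₁ ∈ barrierCone Ω, ∀ w₂ ∈ barrierCone Ω, ¬LinearIndependent ℝ ![w₁, w₂])
    (hopp : ∀ w ≠ 0, w ∈ barrierCone Ω → -w ∉ barrierCone Ω) :
    ∃ w ∈ barrierCone Ω, ∀ w' ∈ barrierCone Ω, ∃ r : ℝ, 0 ≤ r ∧ w' = r • w := by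
  by_cases hzero : ∀ w ∈ barrierCone Ω, w = 0
  · exact ⟨0, mem_barrierCone.mpr ⟨0, by simp⟩, fun w' hw' => ⟨0, le_rfl, by simp [hzero w' hw']⟩⟩
  obtain ⟨w, hwB, hw⟩ := not_forall₂.mp hzero
  refine ⟨w, hwB, fun w' hw' => ?_⟩
  have hdep := hindep w' hw' w hwB
  simp only [linearIndependent_fin2, Matrix.cons_val_one, Matrix.cons_val_zero, ne_eq, hw,
    not_false_eq_true, true_and, not_forall, not_not] at hdep
  obtain ⟨r, rfl⟩ := hdep
  refine ⟨r, not_lt.mp fun hr => hopp w hw hwB ?_, rfl⟩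
  have := smul_mem_barrierCone hw' (inv_nonneg.mpr (neg_nonneg.mpr hr.le))
  rwa [smul_smul, inv_neg, neg_mul, inv_mul_cancel₀ hr.ne, neg_smul, one_smul] at this

section Plane

variable (hE : Module.finrank ℝ E = 2) {w₁ w₂ : E}
  (hind : LinearIndependent ℝ ![w₁, w₂])
include hE hind

theorem injective_innerₛₗ_prod : Function.Injective ((innerₛₗ ℝ w₁).prod (innerₛₗ ℝ w₂)) := by
  refine (injective_iff_map_eq_zero _).mpr fun y hy => ?_
  simp only [LinearMap.prod_apply, innerₛₗ_apply_apply, Function.prod_apply,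
    Prod.mk_eq_zero] at hy
  have hspan : y ∈ Submodule.span ℝ {w₁, w₂} := by
    rw [← Matrix.range_cons_cons_empty, hind.span_eq_top_of_card_eq_finrank (by simp [hE])]
    exact Submodule.mem_top
  obtain ⟨a, b, rfl⟩ := Submodule.mem_span_pair.mp hspan
  rw [← inner_self_eq_zero (𝕜 := ℝ)]
  simp only [inner_add_left, real_inner_smul_left, hy.1, hy.2, mul_zero, add_zero]

theorem exists_inner_eq_of_linearIndependent [FiniteDimensional ℝ E] (c₁ c₂ : ℝ) :
    ∃ z₀, ⟪w₁, z₀⟫ = c₁ ∧ ⟪w₂, z₀⟫ = c₂ := by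
  have hsurj := (LinearMap.injective_iff_surjective_of_finrank_eq_finrank (by simp [hE])).mp
    (injective_innerₛₗ_prod hE hind)
  obtain ⟨z₀, hz₀⟩ := hsurj (c₁, c₂)
  simp only [LinearMap.prod_apply, innerₛₗ_apply_apply, Function.prod_apply,
    Prod.mk.injEq] at hz₀
  exact ⟨z₀, hz₀⟩

theorem exists_pos_mul_norm_le_inner_of_linearIndependent [FiniteDimensional ℝ E] :
    ∃ κ > 0, ∀ y, ⟪w₁, y⟫ ≤ 0 → ⟪w₂, y⟫ ≤ 0 → κ * ‖y‖ ≤ ⟪-(w₁ + w₂), y⟫ := by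
  obtain ⟨K, hK, hanti⟩ := LinearMap.exists_antilipschitzWith _
    (LinearMap.ker_eq_bot.mpr (injective_innerₛₗ_prod hE hind))
  refine ⟨K⁻¹, inv_pos.mpr hK, fun y h₁ h₂ => ?_⟩
  have hy := hanti.le_mul_dist y 0
  simp only [dist_zero_right, map_zero, LinearMap.prod_apply, innerₛₗ_apply_apply,
    Function.prod_apply, Prod.norm_mk, Real.norm_eq_abs, abs_of_nonpos h₁, abs_of_nonpos h₂] at hy
  rw [inv_mul_le_iff₀ (by exact_mod_cast hK), inner_neg_left, inner_add_left]
  exact hy.trans (mul_le_mul_of_nonneg_left (max_le (by linarith) (by linarith)) hK.le)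

end Plane

end InnerProductSpace

namespace Complex

theorem re_exp_neg_arg_mul_I_mul {w : ℂ} (hw : w ≠ 0) (z : ℂ) :
    (exp (-(arg w : ℂ) * I) * z).re = ⟪w, z⟫ / ‖w‖ := by
  rw [Complex.inner, eq_div_iff (norm_ne_zero_iff.mpr hw)]
  conv_rhs => rw [← norm_mul_exp_arg_mul_I w]
  rw [map_mul, conj_ofReal, ← exp_conj, map_mul, conj_ofReal, conj_I, mul_left_comm, re_ofReal_mul]
  ring_nf

theorem abs_arg_le_arccos_of_mul_norm_le_re {z : ℂ} {κ : ℝ} (h : κ * ‖z‖ ≤ z.re) :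
    |arg z| ≤ Real.arccos κ := by
  rcases eq_or_ne z 0 with rfl | hz
  · simpa using Real.arccos_nonneg κ
  rw [← Real.arccos_cos (abs_nonneg _) (abs_arg_le_pi z)]
  refine Real.arccos_le_arccos ?_
  rwa [Real.cos_abs, cos_arg hz, le_div_iff₀ (norm_pos_iff.mpr hz)]

theorem exists_sector_of_mul_norm_le_inner {Ω : Set ℂ} {v p : ℂ} {κ : ℝ} (hv : v ≠ 0)
    (hκ : 0 < κ) (h : ∀ z ∈ Ω, κ * ‖z - p‖ ≤ ⟪v, z - p⟫) :
    ∃ θ δ : ℝ, 0 < δ ∧ δ < Real.pi / 2 ∧ ∃ z₀ : ℂ,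
      Ω ⊆ {z : ℂ | ∃ lam : ℂ, |arg lam| ≤ δ ∧ z = z₀ + exp (-(θ : ℂ) * I) * lam} := by
  have hv' : 0 < ‖v‖ := norm_pos_iff.mpr hv
  -- capping at `1 / 2` keeps the half-opening `arccos κ'` positive
  set κ' := min (κ / ‖v‖) (1 / 2)
  have hκ' : 0 < κ' := lt_min (div_pos hκ hv') one_half_pos
  refine ⟨-arg v, Real.arccos κ', Real.arccos_pos.mpr ((min_le_right _ _).trans_lt one_half_lt_one),
    Real.arccos_lt_pi_div_two.mpr hκ', p, fun z hz =>
      ⟨exp (-(arg v : ℂ) * I) * (z - p), abs_arg_le_arccos_of_mul_norm_le_re ?_, ?_⟩⟩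
  · rw [norm_mul, ← ofReal_neg, norm_exp_ofReal_mul_I, one_mul, ofReal_neg,
      re_exp_neg_arg_mul_I_mul hv]
    calc κ' * ‖z - p‖ ≤ κ / ‖v‖ * ‖z - p‖ := by gcongr; exact min_le_left _ _
      _ ≤ ⟪v, z - p⟫ / ‖v‖ := by rw [div_mul_eq_mul_div]; gcongr; exact h z hz
  · rw [ofReal_neg, neg_neg, ← mul_assoc, ← exp_add, neg_mul, add_neg_cancel, exp_zero, one_mul,
      add_sub_cancel]

theorem exists_sector_of_linearIndependent {Ω : Set ℂ} {w₁ w₂ : ℂ} (hw₁ : w₁ ∈ barrierCone Ω)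
    (hw₂ : w₂ ∈ barrierCone Ω) (hind : LinearIndependent ℝ ![w₁, w₂]) :
    ∃ θ δ : ℝ, 0 < δ ∧ δ < Real.pi / 2 ∧ ∃ z₀ : ℂ,
      Ω ⊆ {z : ℂ | ∃ lam : ℂ, |arg lam| ≤ δ ∧ z = z₀ + exp (-(θ : ℂ) * I) * lam} := by
  obtain ⟨c₁, hc₁⟩ := mem_barrierCone.mp hw₁
  obtain ⟨c₂, hc₂⟩ := mem_barrierCone.mp hw₂
  obtain ⟨z₀, hz₀₁, hz₀₂⟩ :=
    exists_inner_eq_of_linearIndependent finrank_real_complex hind c₁ c₂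
  obtain ⟨κ, hκ, hcone⟩ :=
    exists_pos_mul_norm_le_inner_of_linearIndependent finrank_real_complex hind
  have hsum : -(w₁ + w₂) ≠ 0 := neg_ne_zero.mpr fun h => by
    simpa using LinearIndependent.pair_iff.mp hind 1 1 (by simpa using h)
  refine exists_sector_of_mul_norm_le_inner (p := z₀) hsum hκ fun z hz => hcone _ ?_ ?_
  · linarith [inner_sub_right (𝕜 := ℝ) w₁ z z₀, hc₁ z hz]
  · linarith [inner_sub_right (𝕜 := ℝ) w₂ z z₀, hc₂ z hz]

theorem exists_strip_of_neg_mem_barrierCone {Ω : Set ℂ} (hne : Ω.Nonempty) {w : ℂ} (hw : w ≠ 0)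
    (hwB : w ∈ barrierCone Ω) (hnegB : -w ∈ barrierCone Ω) :
    ∃ θ : ℝ, ∃ ω₁ ω₂ : ℝ, ω₁ ≤ ω₂ ∧
      Ω ⊆ {z : ℂ | ω₁ ≤ (exp ((θ : ℂ) * I) * z).re ∧ (exp ((θ : ℂ) * I) * z).re ≤ ω₂} := by
  obtain ⟨c₁, hc₁⟩ := mem_barrierCone.mp hnegB
  obtain ⟨c₂, hc₂⟩ := mem_barrierCone.mp hwB
  have hbounds : ∀ z ∈ Ω, -c₁ / ‖w‖ ≤ ⟪w, z⟫ / ‖w‖ ∧ ⟪w, z⟫ / ‖w‖ ≤ c₂ / ‖w‖ := fun z hz =>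
    ⟨by gcongr; linarith [hc₁ z hz, inner_neg_left (𝕜 := ℝ) w z], by gcongr; exact hc₂ z hz⟩
  obtain ⟨a, ha⟩ := hne
  refine ⟨-arg w, _, _, (hbounds a ha).1.trans (hbounds a ha).2, fun z hz => ?_⟩
  rw [Set.mem_ofPred_eq, ofReal_neg, re_exp_neg_arg_mul_I_mul hw]
  exact hbounds z hz

end Complex

/-- Every nonempty closed convex subset of `ℂ` is the whole plane, a closed half plane,
contained in a sector, contained in a strip, or compact. -/
theorem closed_convex_classification (Ω : Set ℂ) (hne : Ω.Nonempty)
    (hclosed : IsClosed Ω) (hconv : Convex ℝ Ω) :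
    Ω = Set.univ ∨
      (∃ θ ω : ℝ, Ω = {z : ℂ | (Complex.exp (-(θ : ℂ) * Complex.I) * z).re ≤ ω}) ∨
      (∃ θ δ : ℝ, 0 < δ ∧ δ < Real.pi / 2 ∧ ∃ z₀ : ℂ,
        Ω ⊆ {z : ℂ | ∃ lam : ℂ,
          |Complex.arg lam| ≤ δ ∧ z = z₀ + Complex.exp (-(θ : ℂ) * Complex.I) * lam}) ∨
      (∃ θ : ℝ, ∃ ω₁ ω₂ : ℝ, ω₁ ≤ ω₂ ∧
        Ω ⊆ {z : ℂ | ω₁ ≤ (Complex.exp ((θ : ℂ) * Complex.I) * z).re ∧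
          (Complex.exp ((θ : ℂ) * Complex.I) * z).re ≤ ω₂}) ∨
      IsCompact Ω := by
  by_cases hsector : ∃ w₁ ∈ barrierCone Ω, ∃ w₂ ∈ barrierCone Ω, LinearIndependent ℝ ![w₁, w₂]
  · obtain ⟨w₁, hw₁, w₂, hw₂, hind⟩ := hsector
    exact Or.inr <| Or.inr <| Or.inl <| exists_sector_of_linearIndependent hw₁ hw₂ hind
  by_cases hstrip : ∃ w ≠ 0, w ∈ barrierCone Ω ∧ -w ∈ barrierCone Ω
  · obtain ⟨w, hw, hwB, hnegB⟩ := hstrip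
    exact Or.inr <| Or.inr <| Or.inr <| Or.inl <|
      exists_strip_of_neg_mem_barrierCone hne hw hwB hnegB
  obtain ⟨w, hwB, hray⟩ := exists_mem_barrierCone_forall_eq_nonneg_smul
    (fun w₁ hw₁ w₂ hw₂ hind => hsector ⟨w₁, hw₁, w₂, hw₂, hind⟩)
    (fun w hw hwB hnegB => hstrip ⟨w, hw, hwB, hnegB⟩)
  obtain ⟨c, hΩ⟩ := exists_eq_setOf_inner_le hne hclosed hconv hwB hray
  rcases eq_or_ne w 0 with rfl | hw
  · refine Or.inl (Set.eq_univ_of_forall fun p => ?_)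
    obtain ⟨a, ha⟩ := hne
    have : (0 : ℝ) ≤ c := by simpa [hΩ] using ha
    simpa [hΩ] using this
  · refine Or.inr (Or.inl ⟨arg w, c / ‖w‖, hΩ.trans (Set.ext fun z => ?_)⟩)
    rw [Set.mem_ofPred_eq, Set.mem_ofPred_eq, re_exp_neg_arg_mul_I_mul hw,
      div_le_div_iff_of_pos_right (norm_pos_iff.mpr hw)]
end
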